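/- arXiv:2507.07003 — 3 statements merged into one kernel-verified Lean document; each statement's English description precedes it below -/
import Mathlib

section
/- Let x be a fractional vertex of P_SEP(n). Then the support graph of x has at least n + 3 edges, i.e., |E_x| ≥ n + 3. -/
open Finset

/-- Membership in the subtour-elimination polytope `P_SEP(n)`.
A point is encoded as a symmetric matrix with zero diagonal; the entry `x i j`
is the value on the (undirected) edge `ij` of the complete graph `K_n`. -/
def InPSEP (n : ℕ) (x : Fin n → Fin n → ℝ) : Prop :=
  (∀ i j, x i j = x j i) ∧ (∀ i, x i i = 0) ∧
  (∀ v, (∑ j, x v j) = 2) ∧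
  (∀ S : Finset (Fin n), 3 ≤ S.card → S.card + 3 ≤ n →
    2 ≤ ∑ i ∈ S, ∑ j ∈ Sᶜ, x i j) ∧
  (∀ i j, 0 ≤ x i j ∧ x i j ≤ 1)

/-- The subtour-elimination polytope, as a set. -/
def PSEP (n : ℕ) : Set (Fin n → Fin n → ℝ) := {x | InPSEP n x}

/-- `x` is a vertex (extreme point) of `P_SEP(n)`. -/
def IsVertex (n : ℕ) (x : Fin n → Fin n → ℝ) : Prop :=
  x ∈ (PSEP n).extremePoints ℝ

/-- A metric cost vector on `K_n`: symmetric, zero diagonal, nonnegative,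
satisfying the triangle inequality. -/
def IsMetric (n : ℕ) (c : Fin n → Fin n → ℝ) : Prop :=
  (∀ i j, c i j = c j i) ∧ (∀ i, c i i = 0) ∧ (∀ i j, 0 ≤ c i j) ∧
  (∀ i j k, i ≠ j → j ≠ k → i ≠ k → c i j ≤ c i k + c k j)

/-- The "dot product" `c · x` over the edges of `K_n` (each undirected edge
counted once, whence the division by `2`). -/
noncomputable def dotE (n : ℕ) (c x : Fin n → Fin n → ℝ) : ℝ :=
  (∑ i, ∑ j, c i j * x i j) / 2

/-- The cost of the Hamiltonian tour that visits the nodes in the cyclic order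
`σ 0, σ 1, …, σ (n-1), σ 0`. -/
noncomputable def tourCost (n : ℕ) (c : Fin n → Fin n → ℝ) (σ : Equiv.Perm (Fin n)) : ℝ :=
  ∑ i, c (σ i) (σ (finRotate n i))

/-- `TSP(c)`: minimum cost of a Hamiltonian tour. -/
noncomputable def TSP (n : ℕ) (c : Fin n → Fin n → ℝ) : ℝ :=
  sInf {r | ∃ σ : Equiv.Perm (Fin n), r = tourCost n c σ}

/-- `SEP(c)`: optimal value of the subtour-elimination relaxation. -/
noncomputable def SEP (n : ℕ) (c : Fin n → Fin n → ℝ) : ℝ :=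
  sInf {r | ∃ x, InPSEP n x ∧ r = dotE n c x}

/-- `Gap(x)`: the supremum of `TSP(c)/SEP(c)` over metric costs `c` with
`SEP(c) > 0` for which `x` is an optimal solution of `SEP(c)`. -/
noncomputable def Gap (n : ℕ) (x : Fin n → Fin n → ℝ) : ℝ :=
  sSup {r | ∃ c, IsMetric n c ∧ 0 < SEP n c ∧ dotE n c x = SEP n c ∧
    r = TSP n c / SEP n c}

/-- `Gap⁺(x)`: the supremum of `TSP(c)/(c·x)` over metric costs `c` with `c·x > 0`. -/
noncomputable def GapPlus (n : ℕ) (x : Fin n → Fin n → ℝ) : ℝ :=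
  sSup {r | ∃ c, IsMetric n c ∧ 0 < dotE n c x ∧ r = TSP n c / dotE n c x}

open Classical in
/-- The number of edges of the support graph `G_x` (non-zero components of `x`). -/
noncomputable def supportSize (n : ℕ) (x : Fin n → Fin n → ℝ) : ℕ :=
  (Finset.univ.filter fun p : Fin n × Fin n => p.1 < p.2 ∧ x p.1 p.2 ≠ 0).card

open Classical in
/-- The degree of the node `v` in the support graph `G_x`. -/
noncomputable def suppDegree (n : ℕ) (x : Fin n → Fin n → ℝ) (v : Fin n) : ℕ :=
  (Finset.univ.filter fun j : Fin n => j ≠ v ∧ x v j ≠ 0).card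

/-- `x` is fractional: some edge has value not in `{0,1}`. -/
def IsFracPoint (n : ℕ) (x : Fin n → Fin n → ℝ) : Prop :=
  ∃ i j, i ≠ j ∧ x i j ≠ 0 ∧ x i j ≠ 1

/-- The BB-move `BB(x, ab)`: a new node `w = Fin.last n` is added, the edge `ab`
is set to `0`, the edges `aw, wb` are set to `1`, all other edges at `w` are `0`,
and the remaining entries are copied from `x`. -/
noncomputable def BB {n : ℕ} (x : Fin n → Fin n → ℝ) (a b : Fin n)
    (i j : Fin (n + 1)) : ℝ :=
  if hi : i = Fin.last n then
    (if j = Fin.castSucc a ∨ j = Fin.castSucc b then 1 else 0)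
  else if hj : j = Fin.last n then
    (if i = Fin.castSucc a ∨ i = Fin.castSucc b then 1 else 0)
  else if (i = Fin.castSucc a ∧ j = Fin.castSucc b) ∨
          (i = Fin.castSucc b ∧ j = Fin.castSucc a) then 0
  else x (i.castPred hi) (j.castPred hj)

/-- `IsSuccessor x y`: `y` is obtained from `x` by a finite (possibly empty)
sequence of BB-moves, each applied on a `1`-edge. -/
inductive IsSuccessor : {n m : ℕ} → (Fin n → Fin n → ℝ) → (Fin m → Fin m → ℝ) → Prop
  | refl {n : ℕ} (x : Fin n → Fin n → ℝ) : IsSuccessor x x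
  | step {n m : ℕ} (x : Fin n → Fin n → ℝ) (y : Fin m → Fin m → ℝ) (a b : Fin m) :
      IsSuccessor x y → a ≠ b → y a b = 1 → IsSuccessor x (BB y a b)

/-- The consecutive pairs of a cyclic sequence of nodes (including the
wrap-around pair). -/
def cyclicPairs {n : ℕ} (p : List (Fin n)) : List (Fin n × Fin n) :=
  p.zip (p.rotate 1)

/-- The multiplicity with which the closed walk `p` traverses the undirected
edge `ij`. -/
def multE {n : ℕ} (p : List (Fin n)) (i j : Fin n) : ℕ :=
  (cyclicPairs p).countP fun q =>
    decide ((q.1 = i ∧ q.2 = j) ∨ (q.1 = j ∧ q.2 = i))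

/-- `p` is a Hamiltonian walk on the graph with adjacency relation `A`:
a nonempty closed walk visiting every node at least once, using only edges of
the graph, and traversing every edge at most twice. -/
def IsHamWalk {n : ℕ} (A : Fin n → Fin n → Prop) (p : List (Fin n)) : Prop :=
  p ≠ [] ∧ (∀ v : Fin n, v ∈ p) ∧ (∀ q ∈ cyclicPairs p, A q.1 q.2) ∧
  (∀ i j : Fin n, multE p i j ≤ 2)

/-- Admissibility of the `λ` variables of the LPs `DOPT⁺` and `DOPTI`:
nonnegative, symmetric in the first two (edge) indices, and supported on
genuine triples. -/
def LamOK (n : ℕ) (lam : Fin n → Fin n → Fin n → ℝ) : Prop :=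
  (∀ i j k, 0 ≤ lam i j k) ∧ (∀ i j k, lam i j k = lam j i k) ∧
  (∀ i j k, i = j ∨ k = i ∨ k = j → lam i j k = 0)

/-- The term `∑_{k ≠ i,j} (−λ_{ijk} + λ_{ikj} + λ_{jki})` of the LP constraints. -/
noncomputable def lamTerm (n : ℕ) (lam : Fin n → Fin n → Fin n → ℝ) (i j : Fin n) : ℝ :=
  ∑ k ∈ ({i, j} : Finset (Fin n))ᶜ, (-lam i j k + lam i k j + lam j k i)

/-- The characteristic vector `t_{ij}` of the tour `σ` on the edge `ij`. -/
def tourMult (n : ℕ) (σ : Equiv.Perm (Fin n)) (i j : Fin n) : ℕ :=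
  (Finset.univ.filter fun k : Fin n =>
    (σ k = i ∧ σ (finRotate n k) = j) ∨ (σ k = j ∧ σ (finRotate n k) = i)).card

/-- Feasibility for the LP `DOPT⁺(x)`. -/
def DOPTplusFeasible (n : ℕ) (x : Fin n → Fin n → ℝ)
    (lam : Fin n → Fin n → Fin n → ℝ) (μ : Equiv.Perm (Fin n) → ℝ) : Prop :=
  LamOK n lam ∧ (∀ σ, 0 ≤ μ σ) ∧
  (∀ i j, i ≠ j →
    lamTerm n lam i j + ∑ σ : Equiv.Perm (Fin n), (tourMult n σ i j : ℝ) * μ σ ≤ x i j)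

/-- The optimal value of the LP `DOPT⁺(x)`. -/
noncomputable def DOPTplus (n : ℕ) (x : Fin n → Fin n → ℝ) : ℝ :=
  sSup {r | ∃ lam μ, DOPTplusFeasible n x lam μ ∧ r = ∑ σ : Equiv.Perm (Fin n), μ σ}

/-- Feasibility for the LP `DOPTI(x)`: `μ` is a finitely supported nonnegative
assignment on Hamiltonian walks of `K_n`. -/
def DOPTIFeasible (n : ℕ) (x : Fin n → Fin n → ℝ)
    (lam : Fin n → Fin n → Fin n → ℝ) (μ : List (Fin n) →₀ ℝ) : Prop :=
  LamOK n lam ∧ (∀ p, 0 ≤ μ p) ∧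
  (∀ p ∈ μ.support, IsHamWalk (fun i j : Fin n => i ≠ j) p) ∧
  (∀ i j, i ≠ j →
    lamTerm n lam i j + ∑ p ∈ μ.support, (multE p i j : ℝ) * μ p ≤ x i j)

/-- The optimal value of the LP `DOPTI(x)`. -/
noncomputable def DOPTI (n : ℕ) (x : Fin n → Fin n → ℝ) : ℝ :=
  sSup {r | ∃ lam μ, DOPTIFeasible n x lam μ ∧ r = ∑ p ∈ μ.support, μ p}

/-- Feasibility for the LP `DOPTII(x)`: `μ` is a finitely supported nonnegative
assignment on Hamiltonian walks of the support graph `G_x`, satisfying the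
edge constraints on `E_x`. -/
def DOPTIIFeasible (n : ℕ) (x : Fin n → Fin n → ℝ) (μ : List (Fin n) →₀ ℝ) : Prop :=
  (∀ p, 0 ≤ μ p) ∧
  (∀ p ∈ μ.support, IsHamWalk (fun i j : Fin n => i ≠ j ∧ 0 < x i j) p) ∧
  (∀ i j, i ≠ j → 0 < x i j →
    ∑ p ∈ μ.support, (multE p i j : ℝ) * μ p ≤ x i j)

/-- The optimal value of the LP `DOPTII(x)`. -/
noncomputable def DOPTII (n : ℕ) (x : Fin n → Fin n → ℝ) : ℝ :=
  sSup {r | ∃ μ, DOPTIIFeasible n x μ ∧ r = ∑ p ∈ μ.support, μ p}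

/-- The constant `C(x, ab) = 2∑_{w_{ab}=0} μ_w + ∑_{w_{ab}=1} μ_w + 2∑_{w_{ab}=2} μ_w`. -/
noncomputable def Cconst {n : ℕ} (μ : List (Fin n) →₀ ℝ) (a b : Fin n) : ℝ :=
  2 * ∑ p ∈ μ.support.filter (fun p => multE p a b = 0), μ p
    + ∑ p ∈ μ.support.filter (fun p => multE p a b = 1), μ p
    + 2 * ∑ p ∈ μ.support.filter (fun p => multE p a b = 2), μ p

/-- The constant `C*(x) = max over 1-edges e of x of C(x, e)`. -/
noncomputable def Cstar {n : ℕ} (x : Fin n → Fin n → ℝ) (μ : List (Fin n) →₀ ℝ) : ℝ :=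
  sSup {r | ∃ a b : Fin n, a ≠ b ∧ x a b = 1 ∧ r = Cconst μ a b}

/-- The node from which the `(d+1)`-st BB-move expands the current `1`-path:
for `d = 0` it is `a` itself, afterwards it is the last inserted node. -/
def aNode {n : ℕ} (a : Fin n) : (d : ℕ) → Fin (n + d)
  | 0 => a
  | d + 1 => Fin.last (n + d)

/-- `d` consecutive BB-moves expanding the `1`-edge `ab` into a `1`-path
with `d` internal nodes. -/
noncomputable def BBiter {n : ℕ} (x : Fin n → Fin n → ℝ) (a b : Fin n) :
    (d : ℕ) → Fin (n + d) → Fin (n + d) → ℝ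
  | 0 => x
  | d + 1 => BB (BBiter x a b d) (aNode a d) (Fin.castLE (Nat.le_add_right n d) b)

/-- Extension of the cost `c` on `K_n` to `K_{n+1}` by adding a new node
`w = Fin.last n` at distance `0` from `b`. -/
noncomputable def extendCost {n : ℕ} (c : Fin n → Fin n → ℝ) (b : Fin n)
    (i j : Fin (n + 1)) : ℝ :=
  if hi : i = Fin.last n then
    (if hj : j = Fin.last n then 0 else c (j.castPred hj) b)
  else if hj : j = Fin.last n then c (i.castPred hi) b
  else c (i.castPred hi) (j.castPred hj)

/-- The cost of a (not necessarily closed) path, given as the list of its nodes. -/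
noncomputable def pathCost {n : ℕ} (c : Fin n → Fin n → ℝ) (p : List (Fin n)) : ℝ :=
  ((p.zip p.tail).map fun q => c q.1 q.2).sum

/-- `p` is a path from `i` to `j` in the graph with adjacency relation `A`. -/
def IsPathIn {n : ℕ} (A : Fin n → Fin n → Prop) (i j : Fin n) (p : List (Fin n)) : Prop :=
  p.head? = some i ∧ p.getLast? = some j ∧ List.Chain' (fun u v => A u v) p

open Classical in
/-- The metric completion of the restriction of `c` to the graph with adjacency
relation `A`: on edges of the graph it is `c`, elsewhere it is the cost of a
shortest path in the graph. -/
noncomputable def metricCompletion (n : ℕ) (A : Fin n → Fin n → Prop)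
    (c : Fin n → Fin n → ℝ) (i j : Fin n) : ℝ :=
  if A i j then c i j else sInf {r | ∃ p, IsPathIn A i j p ∧ r = pathCost c p}

/-- A (nonempty, injective) chain of `1`-edges of `x`. -/
def IsOneChain {n : ℕ} (x : Fin n → Fin n → ℝ) (p : List (Fin n)) : Prop :=
  2 ≤ p.length ∧ p.Nodup ∧ List.Chain' (fun i j => x i j = 1) p

/-- A `1`-path of `x`: a maximal path of `1`-edges in the support graph. -/
def IsMaxOnePath {n : ℕ} (x : Fin n → Fin n → ℝ) (p : List (Fin n)) : Prop :=
  IsOneChain x p ∧ (∀ v, ¬ IsOneChain x (v :: p)) ∧ (∀ v, ¬ IsOneChain x (p ++ [v]))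

namespace FracVertexAux

open Finset

variable {n : ℕ} {x : Fin n → Fin n → ℝ}

/-- ones pairs within `T × T`. -/
noncomputable def onesIn (x : Fin n → Fin n → ℝ) (T : Finset (Fin n)) :
    Finset (Fin n × Fin n) :=
  (T ×ˢ T).filter (fun p => x p.1 p.2 = 1)

/-- fractional pairs within `T × T`. -/
noncomputable def fracIn (x : Fin n → Fin n → ℝ) (T : Finset (Fin n)) :
    Finset (Fin n × Fin n) :=
  (T ×ˢ T).filter (fun p => x p.1 p.2 ≠ 1 ∧ x p.1 p.2 ≠ 0)

lemma even_onesIn (hsym : ∀ i j, x i j = x j i) (hdiag : ∀ i, x i i = 0)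
    (T : Finset (Fin n)) : Even (onesIn x T).card := by
  classical
  have hne : ∀ p ∈ onesIn x T, p.1 ≠ p.2 := by
    rintro ⟨i, j⟩ hp h
    simp only at h
    subst h
    simp only [onesIn, mem_filter] at hp
    rw [hdiag] at hp
    exact one_ne_zero hp.2.symm
  have hsplit : onesIn x T =
      (onesIn x T).filter (fun p => p.1 < p.2) ∪
      (onesIn x T).filter (fun p => p.2 < p.1) := by
    ext p
    simp only [mem_union, mem_filter]
    constructor
    · intro hp
      rcases lt_or_gt_of_ne (hne p hp) with h | h
      · exact Or.inl ⟨hp, h⟩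
      · exact Or.inr ⟨hp, h⟩
    · rintro (⟨hp, _⟩ | ⟨hp, _⟩) <;> exact hp
  have hdisj : Disjoint ((onesIn x T).filter (fun p => p.1 < p.2))
      ((onesIn x T).filter (fun p => p.2 < p.1)) := by
    rw [Finset.disjoint_left]
    intro p hp1 hp2
    simp only [Finset.mem_filter] at hp1 hp2
    exact absurd hp2.2 (not_lt.2 (le_of_lt hp1.2))
  have hcard : ((onesIn x T).filter (fun p => p.1 < p.2)).card =
      ((onesIn x T).filter (fun p => p.2 < p.1)).card := by
    apply Finset.card_nbij (fun p => p.swap)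
    · rintro ⟨i, j⟩ hp
      simp only [Finset.mem_coe, Prod.swap, mem_filter, onesIn, mem_product] at hp ⊢
      exact ⟨⟨⟨hp.1.1.2, hp.1.1.1⟩, by rw [← hsym]; exact hp.1.2⟩, hp.2⟩
    · intro p _ q _ h
      exact Prod.swap_injective h
    · rintro ⟨i, j⟩ hp
      refine ⟨(j, i), ?_, rfl⟩
      simp only [Set.mem_image, Finset.coe_filter, Set.mem_setOf_eq,
        mem_filter, onesIn, mem_product] at hp ⊢
      exact ⟨⟨⟨hp.1.1.2, hp.1.1.1⟩, by rw [← hsym]; exact hp.1.2⟩, hp.2⟩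
  rw [hsplit, Finset.card_union_of_disjoint hdisj, ← hcard]
  exact ⟨_, rfl⟩

lemma sum_split (T : Finset (Fin n)) :
    ∑ p ∈ T ×ˢ T, x p.1 p.2 =
      ((onesIn x T).card : ℝ) + ∑ p ∈ fracIn x T, x p.1 p.2 := by
  classical
  rw [← Finset.sum_filter_add_sum_filter_not (T ×ˢ T) (fun p => x p.1 p.2 = 1)]
  congr 1
  · rw [Finset.sum_congr rfl (fun p hp => (Finset.mem_filter.1 hp).2)]
    simp [onesIn]
  · rw [← Finset.sum_filter_add_sum_filter_not
      ((T ×ˢ T).filter (fun p => ¬ x p.1 p.2 = 1)) (fun p => x p.1 p.2 = 0)]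
    have h0 : ∑ p ∈ (((T ×ˢ T).filter (fun p => ¬ x p.1 p.2 = 1)).filter
        (fun p => x p.1 p.2 = 0)), x p.1 p.2 = 0 := by
      apply Finset.sum_eq_zero
      intro p hp
      exact (Finset.mem_filter.1 hp).2
    rw [h0, zero_add]
    apply Finset.sum_congr _ (fun _ _ => rfl)
    rw [Finset.filter_filter]
    unfold fracIn
    congr 1

/-- the fractional neighbours of `v`. -/
noncomputable def fracNbrs (x : Fin n → Fin n → ℝ) (v : Fin n) : Finset (Fin n) := by
  classical exact univ.filter (fun j => x v j ≠ 1 ∧ x v j ≠ 0)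

/-- the 1-neighbours of `v`. -/
noncomputable def onesRow (x : Fin n → Fin n → ℝ) (v : Fin n) : Finset (Fin n) := by
  classical exact univ.filter (fun j => x v j = 1)

/-- the support neighbours of `v`. -/
noncomputable def suppNbrs (x : Fin n → Fin n → ℝ) (v : Fin n) : Finset (Fin n) := by
  classical exact univ.filter (fun j => j ≠ v ∧ x v j ≠ 0)

lemma mem_fracNbrs {v j : Fin n} : j ∈ fracNbrs x v ↔ x v j ≠ 1 ∧ x v j ≠ 0 := by
  simp [fracNbrs]

lemma suppDegree_eq (v : Fin n) : suppDegree n x v = (suppNbrs x v).card := by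
  unfold suppDegree suppNbrs
  congr 1

lemma row_split (hrow : ∀ v, (∑ j, x v j) = 2) (v : Fin n) :
    (2 : ℝ) = ((onesRow x v).card : ℝ) + ∑ j ∈ fracNbrs x v, x v j := by
  classical
  rw [← hrow v]
  rw [← Finset.sum_filter_add_sum_filter_not univ (fun j => x v j = 1) (fun j => x v j)]
  congr 1
  · rw [Finset.sum_congr rfl (fun j hj => (Finset.mem_filter.1 hj).2)]
    simp [onesRow]
  · rw [← Finset.sum_filter_add_sum_filter_not
      (univ.filter (fun j => ¬ x v j = 1)) (fun j => x v j = 0) (fun j => x v j)]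
    have h0 : ∑ j ∈ ((univ.filter (fun j => ¬ x v j = 1)).filter (fun j => x v j = 0)),
        x v j = 0 :=
      Finset.sum_eq_zero (fun j hj => (Finset.mem_filter.1 hj).2)
    rw [h0, zero_add, Finset.filter_filter]
    apply Finset.sum_congr _ (fun _ _ => rfl)
    unfold fracNbrs
    congr 1

lemma no_int_frac {r : ℝ} (h1 : r ≠ 1) (h0 : r ≠ 0) (hl : 0 ≤ r) (hu : r ≤ 1)
    (m : ℕ) (hm : r = 2 - (m : ℝ)) : False := by
  have h2 : r < 1 := lt_of_le_of_ne hu h1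
  have h3 : 0 < r := lt_of_le_of_ne hl (Ne.symm h0)
  rcases Nat.lt_or_ge m 2 with h | h
  · have : (m : ℝ) ≤ 1 := by exact_mod_cast Nat.lt_succ_iff.mp h
    linarith
  · have : (2 : ℝ) ≤ (m : ℝ) := by exact_mod_cast h
    linarith

lemma two_le_fracNbrs_card (hrow : ∀ v, (∑ j, x v j) = 2)
    (hbd : ∀ i j, 0 ≤ x i j ∧ x i j ≤ 1) {v : Fin n}
    (hv : (fracNbrs x v).Nonempty) : 2 ≤ (fracNbrs x v).card := by
  classical
  by_contra h
  push_neg at h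
  interval_cases hc : (fracNbrs x v).card
  · rw [Finset.card_eq_zero] at hc
    rw [hc] at hv
    exact Finset.not_nonempty_empty hv
  · rw [Finset.card_eq_one] at hc
    obtain ⟨w, hw⟩ := hc
    have hwmem : w ∈ fracNbrs x v := by rw [hw]; exact Finset.mem_singleton_self w
    rw [mem_fracNbrs] at hwmem
    have := row_split hrow v
    rw [hw, Finset.sum_singleton] at this
    have hc1 : (fracNbrs x v).card = 1 := by rw [hw]; simp
    exact no_int_frac hwmem.1 hwmem.2 (hbd v w).1 (hbd v w).2 (onesRow x v).card
      (by linarith)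

lemma sum_row_supp (hdiag : ∀ i, x i i = 0) (hrow : ∀ v, (∑ j, x v j) = 2)
    (v : Fin n) : ∑ j ∈ suppNbrs x v, x v j = 2 := by
  classical
  rw [← hrow v]
  apply Finset.sum_subset (Finset.subset_univ _)
  intro j _ hj
  simp only [suppNbrs, Finset.mem_filter, Finset.mem_univ, true_and, not_and, ne_eq,
    not_not] at hj
  by_cases hjv : j = v
  · rw [hjv]; exact hdiag v
  · exact hj hjv

lemma two_le_suppDegree (hdiag : ∀ i, x i i = 0) (hrow : ∀ v, (∑ j, x v j) = 2)
    (hbd : ∀ i j, 0 ≤ x i j ∧ x i j ≤ 1) (v : Fin n) :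
    2 ≤ suppDegree n x v := by
  rw [suppDegree_eq]
  have h2 := sum_row_supp hdiag hrow v
  have hle : (2 : ℝ) ≤ ((suppNbrs x v).card : ℝ) := by
    rw [← h2]
    calc ∑ j ∈ suppNbrs x v, x v j ≤ ∑ _j ∈ suppNbrs x v, (1 : ℝ) :=
          Finset.sum_le_sum (fun j _ => (hbd v j).2)
      _ = ((suppNbrs x v).card : ℝ) := by simp
  exact_mod_cast hle

lemma three_le_suppDegree (hdiag : ∀ i, x i i = 0) (hrow : ∀ v, (∑ j, x v j) = 2)
    (hbd : ∀ i j, 0 ≤ x i j ∧ x i j ≤ 1) {v w : Fin n}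
    (hw : w ∈ fracNbrs x v) : 3 ≤ suppDegree n x v := by
  classical
  rw [suppDegree_eq]
  rw [mem_fracNbrs] at hw
  have hwv : w ≠ v := by
    intro h
    rw [h, hdiag] at hw
    exact hw.2 rfl
  have hwmem : w ∈ suppNbrs x v := by
    simp only [suppNbrs, Finset.mem_filter, Finset.mem_univ, true_and]
    exact ⟨hwv, hw.2⟩
  have h2 := sum_row_supp hdiag hrow v
  rw [← Finset.add_sum_erase _ _ hwmem] at h2
  have hlt : x v w < 1 := lt_of_le_of_ne (hbd v w).2 hw.1
  have hle : ∑ j ∈ (suppNbrs x v).erase w, x v j ≤ (((suppNbrs x v).erase w).card : ℝ) := by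
    calc ∑ j ∈ (suppNbrs x v).erase w, x v j ≤ ∑ _j ∈ (suppNbrs x v).erase w, (1 : ℝ) :=
          Finset.sum_le_sum (fun j _ => (hbd v j).2)
      _ = _ := by simp
  have hec : ((suppNbrs x v).erase w).card = (suppNbrs x v).card - 1 :=
    Finset.card_erase_of_mem hwmem
  have hcpos : 1 ≤ (suppNbrs x v).card := Finset.card_pos.2 ⟨w, hwmem⟩
  have h3 : (2 : ℝ) < 1 + (((suppNbrs x v).card : ℝ) - 1) := by
    have : (((suppNbrs x v).erase w).card : ℝ) = ((suppNbrs x v).card : ℝ) - 1 := by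
      rw [hec, Nat.cast_sub hcpos, Nat.cast_one]
    rw [← this]
    linarith
  have : (2 : ℝ) < ((suppNbrs x v).card : ℝ) := by linarith
  exact_mod_cast this

/-- the set of nodes incident to a fractional edge. -/
noncomputable def VF (x : Fin n → Fin n → ℝ) : Finset (Fin n) := by
  classical exact univ.filter (fun v => (fracNbrs x v).Nonempty)

lemma mem_VF_iff {v : Fin n} : v ∈ VF x ↔ (fracNbrs x v).Nonempty := by
  simp [VF]

lemma fracNbrs_symm (hsym : ∀ i j, x i j = x j i) {v j : Fin n}
    (h : j ∈ fracNbrs x v) : v ∈ fracNbrs x j := by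
  rw [mem_fracNbrs] at h ⊢
  rw [hsym j v]
  exact h

lemma fracNbrs_ne (hdiag : ∀ i, x i i = 0) {v j : Fin n}
    (h : j ∈ fracNbrs x v) : j ≠ v := by
  intro hjv
  rw [mem_fracNbrs, hjv, hdiag] at h
  exact h.2 rfl

lemma fracNbrs_mem_VF (hsym : ∀ i j, x i j = x j i) {v j : Fin n}
    (h : j ∈ fracNbrs x v) : j ∈ VF x :=
  mem_VF_iff.2 ⟨v, fracNbrs_symm hsym h⟩

lemma two_mul_supportSize (hsym : ∀ i j, x i j = x j i) :
    2 * supportSize n x = ∑ v, suppDegree n x v := by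
  classical
  have hfib : ∀ v : Fin n,
      ((univ.filter (fun p : Fin n × Fin n => p.1 ≠ p.2 ∧ x p.1 p.2 ≠ 0)).filter
        (fun p => p.1 = v)).card = suppDegree n x v := by
    intro v
    rw [suppDegree_eq]
    apply Finset.card_nbij (fun p => p.2)
    · rintro ⟨i, j⟩ hp
      simp only [Finset.mem_coe, Finset.mem_filter, Finset.mem_univ, true_and] at hp
      obtain ⟨⟨hij, hx0⟩, hiv⟩ := hp
      subst hiv
      simp only [Finset.mem_coe, suppNbrs, Finset.mem_filter, Finset.mem_univ, true_and]
      exact ⟨fun h => hij h.symm, hx0⟩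
    · rintro ⟨i, j⟩ hp ⟨i', j'⟩ hp' h
      simp only [Finset.coe_filter, Set.mem_setOf_eq] at hp hp'
      simp only at h
      rw [Prod.ext_iff]
      exact ⟨hp.2.trans hp'.2.symm, h⟩
    · intro j hj
      simp only [Finset.coe_filter, Set.mem_setOf_eq, suppNbrs, Finset.mem_coe,
        Finset.mem_filter, Finset.mem_univ, true_and] at hj
      refine ⟨(v, j), ?_, rfl⟩
      simp only [Set.mem_setOf_eq, Finset.mem_coe, Finset.mem_filter, Finset.mem_univ,
        true_and]
      exact ⟨⟨fun h => hj.1 h.symm, hj.2⟩, by trivial⟩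
  have hC : (univ.filter (fun p : Fin n × Fin n => p.1 ≠ p.2 ∧ x p.1 p.2 ≠ 0)).card
      = ∑ v, suppDegree n x v := by
    rw [Finset.card_eq_sum_card_fiberwise (f := Prod.fst) (t := univ)
      (fun _ _ => Finset.mem_univ _)]
    exact Finset.sum_congr rfl (fun v _ => hfib v)
  have hunion : univ.filter (fun p : Fin n × Fin n => p.1 ≠ p.2 ∧ x p.1 p.2 ≠ 0) =
      (univ.filter (fun p : Fin n × Fin n => p.1 < p.2 ∧ x p.1 p.2 ≠ 0)) ∪
      (univ.filter (fun p : Fin n × Fin n => p.2 < p.1 ∧ x p.1 p.2 ≠ 0)) := by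
    ext p
    simp only [Finset.mem_filter, Finset.mem_univ, true_and, Finset.mem_union]
    constructor
    · rintro ⟨hne, hx0⟩
      rcases lt_or_gt_of_ne hne with h | h
      · exact Or.inl ⟨h, hx0⟩
      · exact Or.inr ⟨h, hx0⟩
    · rintro (⟨h, hx0⟩ | ⟨h, hx0⟩)
      · exact ⟨ne_of_lt h, hx0⟩
      · exact ⟨(ne_of_lt h).symm, hx0⟩
  have hdisj : Disjoint
      (univ.filter (fun p : Fin n × Fin n => p.1 < p.2 ∧ x p.1 p.2 ≠ 0))
      (univ.filter (fun p : Fin n × Fin n => p.2 < p.1 ∧ x p.1 p.2 ≠ 0)) := by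
    rw [Finset.disjoint_left]
    intro p hp1 hp2
    simp only [Finset.mem_filter] at hp1 hp2
    exact absurd hp2.2.1 (not_lt.2 (le_of_lt hp1.2.1))
  have hBA : (univ.filter (fun p : Fin n × Fin n => p.2 < p.1 ∧ x p.1 p.2 ≠ 0)).card =
      (univ.filter (fun p : Fin n × Fin n => p.1 < p.2 ∧ x p.1 p.2 ≠ 0)).card := by
    apply Finset.card_nbij (fun p => p.swap)
    · rintro ⟨i, j⟩ hp
      simp only [Finset.mem_coe, Finset.mem_filter, Finset.mem_univ, true_and, Prod.swap] at hp ⊢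
      refine ⟨hp.1, ?_⟩
      rw [hsym j i]
      exact hp.2
    · intro p _ q _ h
      exact Prod.swap_injective h
    · rintro ⟨i, j⟩ hp
      simp only [Finset.coe_filter, Set.mem_setOf_eq, Finset.mem_univ, true_and] at hp ⊢
      refine ⟨(j, i), ?_, rfl⟩
      simp only [Set.mem_setOf_eq]
      refine ⟨hp.1, ?_⟩
      rw [hsym j i]
      exact hp.2
  have hsupp : supportSize n x =
      (univ.filter (fun p : Fin n × Fin n => p.1 < p.2 ∧ x p.1 p.2 ≠ 0)).card := by
    unfold supportSize
    congr 1
  rw [← hC, hunion, Finset.card_union_of_disjoint hdisj, hBA, hsupp]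
  ring

lemma count_conclusion (hsym : ∀ i j, x i j = x j i) (hdiag : ∀ i, x i i = 0)
    (hrow : ∀ v, (∑ j, x v j) = 2) (hbd : ∀ i j, 0 ≤ x i j ∧ x i j ≤ 1)
    (hVF : 5 ≤ (VF x).card) : n + 3 ≤ supportSize n x := by
  classical
  have hsum : ∑ v, suppDegree n x v =
      ∑ v ∈ VF x, suppDegree n x v + ∑ v ∈ (VF x)ᶜ, suppDegree n x v :=
    (Finset.sum_add_sum_compl (VF x) _).symm
  have h1 : 3 * (VF x).card ≤ ∑ v ∈ VF x, suppDegree n x v := by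
    calc 3 * (VF x).card = ∑ _v ∈ VF x, 3 := by rw [Finset.sum_const]; ring
    _ ≤ ∑ v ∈ VF x, suppDegree n x v := by
        apply Finset.sum_le_sum
        intro v hv
        obtain ⟨w, hw⟩ := mem_VF_iff.1 hv
        exact three_le_suppDegree hdiag hrow hbd hw
  have h2 : 2 * ((VF x)ᶜ).card ≤ ∑ v ∈ (VF x)ᶜ, suppDegree n x v := by
    calc 2 * ((VF x)ᶜ).card = ∑ _v ∈ (VF x)ᶜ, 2 := by rw [Finset.sum_const]; ring
    _ ≤ _ := Finset.sum_le_sum (fun v _ => two_le_suppDegree hdiag hrow hbd v)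
  have hcompl : ((VF x)ᶜ).card = n - (VF x).card := by
    rw [Finset.card_compl]
    simp
  have hVFn : (VF x).card ≤ n := by
    calc (VF x).card ≤ Fintype.card (Fin n) := Finset.card_le_univ _
    _ = n := Fintype.card_fin n
  have := two_mul_supportSize (x := x) hsym
  omega

lemma tight_pair (hsym : ∀ i j, x i j = x j i) (hdiag : ∀ i, x i i = 0)
    (hrow : ∀ v, (∑ j, x v j) = 2) (hbd : ∀ i j, 0 ≤ x i j ∧ x i j ≤ 1)
    (S : Finset (Fin n)) {u v : Fin n}
    (huv : u ≠ v) (hu : u ∈ S) (hv : v ∈ S)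
    (hfr : x u v ≠ 1 ∧ x u v ≠ 0)
    (honly : ∀ p ∈ fracIn x S, p = (u, v) ∨ p = (v, u))
    (htight : ∑ i ∈ S, ∑ j ∈ Sᶜ, x i j = 2) : False := by
  classical
  have hinS : ∑ p ∈ S ×ˢ S, x p.1 p.2 = 2 * (S.card : ℝ) - 2 := by
    have h1 : ∀ i : Fin n, ∑ j ∈ S, x i j + ∑ j ∈ Sᶜ, x i j = 2 := by
      intro i
      rw [Finset.sum_add_sum_compl]
      exact hrow i
    have h2 : ∑ i ∈ S, (∑ j ∈ S, x i j + ∑ j ∈ Sᶜ, x i j) = 2 * (S.card : ℝ) := by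
      rw [Finset.sum_congr rfl (fun i _ => h1 i), Finset.sum_const]
      simp [mul_comm]
    rw [Finset.sum_add_distrib, htight] at h2
    rw [Finset.sum_product]
    linarith
  have hsplit := sum_split (x := x) S
  have hfraceq : fracIn x S = {(u, v), (v, u)} := by
    apply Finset.Subset.antisymm
    · intro p hp
      rcases honly p hp with h | h <;> simp [h]
    · intro p hp
      simp only [Finset.mem_insert, Finset.mem_singleton] at hp
      rcases hp with rfl | rfl <;>
        simp only [fracIn, Finset.mem_filter, Finset.mem_product]
      · exact ⟨⟨hu, hv⟩, hfr⟩
      · rw [hsym v u]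
        exact ⟨⟨hv, hu⟩, hfr⟩
  have hpairne : ((u, v) : Fin n × Fin n) ≠ (v, u) := by
    simp only [ne_eq, Prod.mk.injEq, not_and]
    intro h
    exact absurd h huv
  have hsumfrac : ∑ p ∈ fracIn x S, x p.1 p.2 = 2 * x u v := by
    rw [hfraceq, Finset.sum_pair hpairne]
    simp only
    rw [hsym v u]
    ring
  obtain ⟨k, hk⟩ := even_onesIn hsym hdiag S
  rw [hinS, hk, hsumfrac] at hsplit
  have hxuv : x u v = (S.card : ℝ) - 1 - (k : ℝ) := by
    push_cast at hsplit ⊢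
    linarith
  have h0 : 0 < x u v := lt_of_le_of_ne (hbd u v).1 (Ne.symm hfr.2)
  have h1 : x u v < 1 := lt_of_le_of_ne (hbd u v).2 hfr.1
  have hlt1 : (k : ℝ) + 1 < (S.card : ℝ) := by linarith
  have hlt2 : (S.card : ℝ) < (k : ℝ) + 2 := by linarith
  have hn1 : k + 1 < S.card := by exact_mod_cast hlt1
  have hn2 : S.card < k + 2 := by exact_mod_cast hlt2
  omega

lemma nat_two_sub_one {m : ℕ} {s : ℝ} (h : 2 = (m : ℝ) + s) (h0 : 0 < s) (h2 : s < 2) :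
    s = 1 := by
  have hm2 : (m : ℝ) < 2 := by linarith
  have hm0 : (0 : ℝ) < (m : ℝ) := by linarith
  have hm2' : m < 2 := by exact_mod_cast hm2
  have hm0' : 0 < m := by exact_mod_cast hm0
  have : m = 1 := by omega
  rw [this] at h
  push_cast at h
  linarith

lemma vf3_false (hsym : ∀ i j, x i j = x j i) (hdiag : ∀ i, x i i = 0)
    (hrow : ∀ v, (∑ j, x v j) = 2) (hbd : ∀ i j, 0 ≤ x i j ∧ x i j ≤ 1)
    (hVF3 : (VF x).card = 3) : False := by
  classical
  obtain ⟨a, b, c, hab, hac, hbc, hVFeq⟩ := Finset.card_eq_three.1 hVF3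
  have hsub : ∀ v, fracNbrs x v ⊆ (VF x).erase v := by
    intro v j hj
    exact Finset.mem_erase.2 ⟨fracNbrs_ne hdiag hj, fracNbrs_mem_VF hsym hj⟩
  have herase : ∀ u v w : Fin n, u ≠ v → u ≠ w → v ≠ w →
      (VF x = {u, v, w} ∨ VF x = {v, u, w} ∨ VF x = {v, w, u}) →
      (VF x).erase u = {v, w} := by
    intro u v w huv huw hvw h
    ext z
    have hmem : z ∈ VF x ↔ (z = u ∨ z = v ∨ z = w) := by
      rcases h with h | h | h <;> rw [h] <;>
        simp only [Finset.mem_insert, Finset.mem_singleton] <;> tauto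
    simp only [Finset.mem_erase, hmem, Finset.mem_insert, Finset.mem_singleton]
    constructor
    · rintro ⟨hz, rfl | rfl | rfl⟩
      · exact absurd rfl hz
      · exact Or.inl rfl
      · exact Or.inr rfl
    · rintro (rfl | rfl)
      · exact ⟨Ne.symm huv, Or.inr (Or.inl rfl)⟩
      · exact ⟨Ne.symm huw, Or.inr (Or.inr rfl)⟩
  have hpair_card : ∀ v w : Fin n, v ≠ w → ({v, w} : Finset (Fin n)).card = 2 := by
    intro v w hvw
    rw [Finset.card_insert_of_notMem (by simp [hvw]), Finset.card_singleton]
  have hfrEq : ∀ u v w : Fin n, u ≠ v → u ≠ w → v ≠ w →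
      (VF x = {u, v, w} ∨ VF x = {v, u, w} ∨ VF x = {v, w, u}) →
      fracNbrs x u = {v, w} := by
    intro u v w huv huw hvw h
    have hu : u ∈ VF x := by
      rcases h with h | h | h <;> rw [h] <;> simp
    have h1 : fracNbrs x u ⊆ {v, w} := by
      rw [← herase u v w huv huw hvw h]
      exact hsub u
    apply Finset.eq_of_subset_of_card_le h1
    rw [hpair_card v w hvw]
    exact two_le_fracNbrs_card hrow hbd (mem_VF_iff.1 hu)
  have hfa : fracNbrs x a = {b, c} := hfrEq a b c hab hac hbc (Or.inl hVFeq)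
  have hfb : fracNbrs x b = {a, c} := hfrEq b a c (Ne.symm hab) hbc hac (Or.inr (Or.inl hVFeq))
  have hfc : fracNbrs x c = {a, b} := hfrEq c a b (Ne.symm hac) (Ne.symm hbc) hab
    (Or.inr (Or.inr hVFeq))
  have hmab : b ∈ fracNbrs x a := by rw [hfa]; simp
  have hmac : c ∈ fracNbrs x a := by rw [hfa]; simp
  have hmbc : c ∈ fracNbrs x b := by rw [hfb]; simp
  have hfr_ab := mem_fracNbrs.1 hmab
  have hfr_ac := mem_fracNbrs.1 hmac
  have hfr_bc := mem_fracNbrs.1 hmbc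
  have hbound : ∀ i j : Fin n, x i j ≠ 1 → x i j ≠ 0 → 0 < x i j ∧ x i j < 1 := by
    intro i j h1 h0
    exact ⟨lt_of_le_of_ne (hbd i j).1 (Ne.symm h0), lt_of_le_of_ne (hbd i j).2 h1⟩
  obtain ⟨hab0, hab1⟩ := hbound a b hfr_ab.1 hfr_ab.2
  obtain ⟨hac0, hac1⟩ := hbound a c hfr_ac.1 hfr_ac.2
  obtain ⟨hbc0, hbc1⟩ := hbound b c hfr_bc.1 hfr_bc.2
  have hsuma : x a b + x a c = 1 := by
    have h := row_split hrow a
    rw [hfa, Finset.sum_pair hbc] at h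
    exact nat_two_sub_one h (by linarith) (by linarith)
  have hsumb : x b a + x b c = 1 := by
    have h := row_split hrow b
    rw [hfb, Finset.sum_pair hac] at h
    have hba : 0 < x b a ∧ x b a < 1 := by rw [hsym b a]; exact ⟨hab0, hab1⟩
    exact nat_two_sub_one h (by linarith [hba.1]) (by linarith [hba.2])
  have hsumc : x c a + x c b = 1 := by
    have h := row_split hrow c
    rw [hfc, Finset.sum_pair hab] at h
    have hca : 0 < x c a ∧ x c a < 1 := by rw [hsym c a]; exact ⟨hac0, hac1⟩
    have hcb : 0 < x c b ∧ x c b < 1 := by rw [hsym c b]; exact ⟨hbc0, hbc1⟩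
    exact nat_two_sub_one h (by linarith [hca.1, hcb.1]) (by linarith [hca.2, hcb.2])
  -- global parity
  have hglobal : ∑ p ∈ (univ : Finset (Fin n)) ×ˢ univ, x p.1 p.2 = 2 * (n : ℝ) := by
    rw [Finset.sum_product]
    rw [Finset.sum_congr rfl (fun i _ => hrow i), Finset.sum_const]
    simp [mul_comm]
  have hT : ∀ i j : Fin n, x i j ≠ 1 → x i j ≠ 0 →
      i ∈ ({a, b, c} : Finset (Fin n)) ∧ j ∈ ({a, b, c} : Finset (Fin n)) := by
    intro i j h1 h0
    have hi : i ∈ VF x := mem_VF_iff.2 ⟨j, mem_fracNbrs.2 ⟨h1, h0⟩⟩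
    have hj : j ∈ VF x := fracNbrs_mem_VF hsym (mem_fracNbrs.2 ⟨h1, h0⟩)
    rw [hVFeq] at hi hj
    exact ⟨hi, hj⟩
  have hfrT : ∀ i j : Fin n, i ∈ ({a, b, c} : Finset (Fin n)) →
      j ∈ ({a, b, c} : Finset (Fin n)) → i ≠ j → (x i j ≠ 1 ∧ x i j ≠ 0) := by
    intro i j hi hj hij
    simp only [Finset.mem_insert, Finset.mem_singleton] at hi hj
    rcases hi with rfl | rfl | rfl <;> rcases hj with rfl | rfl | rfl <;>
      first
        | exact absurd rfl hij
        | exact hfr_ab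
        | exact hfr_ac
        | exact hfr_bc
        | (rw [hsym]; first | exact hfr_ab | exact hfr_ac | exact hfr_bc)
  have hsubT : fracIn x univ ⊆ ({a, b, c} : Finset (Fin n)) ×ˢ {a, b, c} := by
    rintro ⟨i, j⟩ hp
    simp only [fracIn, Finset.mem_filter] at hp
    obtain ⟨hij1, hij0⟩ := hp.2
    rw [Finset.mem_product]
    exact hT i j hij1 hij0
  have hsumeq : ∑ p ∈ fracIn x univ, x p.1 p.2 =
      ∑ p ∈ ({a, b, c} : Finset (Fin n)) ×ˢ {a, b, c}, x p.1 p.2 := by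
    apply Finset.sum_subset hsubT
    rintro ⟨i, j⟩ hp hnp
    rw [Finset.mem_product] at hp
    by_contra hne
    have h0 : x i j ≠ 0 := hne
    by_cases hij : i = j
    · rw [hij, hdiag] at h0
      exact h0 rfl
    · have := hfrT i j hp.1 hp.2 hij
      apply hnp
      simp only [fracIn, Finset.mem_filter, Finset.mem_product, Finset.mem_univ]
      exact ⟨⟨trivial, trivial⟩, this⟩
  have hinner : ∀ i : Fin n, ∑ j ∈ ({a, b, c} : Finset (Fin n)), x i j =
      x i a + x i b + x i c := by
    intro i
    rw [Finset.sum_insert (by simp only [Finset.mem_insert, Finset.mem_singleton, not_or]; exact ⟨hab, hac⟩),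
      Finset.sum_insert (by simp only [Finset.mem_singleton]; exact hbc),
      Finset.sum_singleton]
    ring
  have hnab : a ∉ ({b, c} : Finset (Fin n)) := by
    simp only [Finset.mem_insert, Finset.mem_singleton, not_or]
    exact ⟨hab, hac⟩
  have hnbc : b ∉ ({c} : Finset (Fin n)) := by
    simp only [Finset.mem_singleton]
    exact hbc
  have houter : ∑ p ∈ ({a, b, c} : Finset (Fin n)) ×ˢ {a, b, c}, x p.1 p.2 = 3 := by
    rw [Finset.sum_product]
    show ∑ i ∈ ({a, b, c} : Finset (Fin n)), ∑ j ∈ ({a, b, c} : Finset (Fin n)), x i j = 3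
    simp only [hinner]
    rw [Finset.sum_insert hnab, Finset.sum_insert hnbc, Finset.sum_singleton]
    rw [hdiag a, hdiag b, hdiag c]
    have h1 : x b a = x a b := hsym b a
    have h2 : x c a = x a c := hsym c a
    have h3 : x c b = x b c := hsym c b
    rw [hsym b a] at hsumb
    rw [hsym c a, hsym c b] at hsumc
    linarith
  obtain ⟨k, hk⟩ := even_onesIn hsym hdiag (univ : Finset (Fin n))
  have hfin := sum_split (x := x) (univ : Finset (Fin n))
  rw [hglobal, hk, hsumeq, houter] at hfin
  have : 2 * (n : ℝ) = 2 * (k : ℝ) + 3 := by push_cast at hfin ⊢; linarith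
  have h2n : (2 * n : ℝ) = (2 * k + 3 : ℕ) := by push_cast; linarith
  have : 2 * n = 2 * k + 3 := by exact_mod_cast h2n
  omega

/-- indicator of the (undirected) edge `uv`. -/
noncomputable def ind (u v i j : Fin n) : ℝ := by
  classical exact if (i = u ∧ j = v) ∨ (i = v ∧ j = u) then 1 else 0

lemma ind_symm (u v i j : Fin n) : ind u v i j = ind u v j i := by
  classical
  unfold ind
  by_cases h : (i = u ∧ j = v) ∨ (i = v ∧ j = u)
  · rw [if_pos h, if_pos (by tauto)]
  · rw [if_neg h, if_neg (by tauto)]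

lemma ind_diag {u v : Fin n} (huv : u ≠ v) (i : Fin n) : ind u v i i = 0 := by
  classical
  unfold ind
  rw [if_neg]
  rintro (⟨rfl, rfl⟩ | ⟨rfl, rfl⟩) <;> exact huv rfl

lemma ind_self {u v : Fin n} : ind u v u v = 1 := by
  classical
  unfold ind
  rw [if_pos (Or.inl ⟨rfl, rfl⟩)]

lemma ind_other {u v i j : Fin n} (h1 : ¬(i = u ∧ j = v)) (h2 : ¬(i = v ∧ j = u)) :
    ind u v i j = 0 := by
  classical
  unfold ind
  rw [if_neg]
  rintro (h | h)
  · exact h1 h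
  · exact h2 h

lemma sum_sum_ind {u v : Fin n} (huv : u ≠ v) (A B : Finset (Fin n)) :
    ∑ i ∈ A, ∑ j ∈ B, ind u v i j =
      (if u ∈ A ∧ v ∈ B then (1 : ℝ) else 0) + (if v ∈ A ∧ u ∈ B then 1 else 0) := by
  classical
  have he : ∀ i, ∑ j ∈ B, ind u v i j =
      (if i = u then (if v ∈ B then (1 : ℝ) else 0) else 0) +
      (if i = v then (if u ∈ B then (1 : ℝ) else 0) else 0) := by
    intro i
    by_cases hiu : i = u
    · subst hiu
      have hne : i ≠ v := huv
      have hval : ∀ j, ind i v i j = if j = v then (1 : ℝ) else 0 := by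
        intro j
        by_cases hjv : j = v
        · subst hjv
          rw [ind_self, if_pos rfl]
        · rw [ind_other (fun h => hjv h.2) (fun h => hne h.1), if_neg hjv]
      rw [Finset.sum_congr rfl (fun j _ => hval j)]
      rw [Finset.sum_ite_eq' B v (fun _ => (1 : ℝ))]
      rw [if_pos rfl, if_neg hne]
      ring
    · by_cases hiv : i = v
      · have hval : ∀ j, ind u v i j = if j = u then (1 : ℝ) else 0 := by
          intro j
          by_cases hju : j = u
          · subst hju
            unfold ind
            rw [if_pos (Or.inr ⟨hiv, rfl⟩), if_pos rfl]
          · rw [ind_other (fun h => hiu h.1) (fun h => hju h.2), if_neg hju]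
        rw [Finset.sum_congr rfl (fun j _ => hval j)]
        rw [Finset.sum_ite_eq' B u (fun _ => (1 : ℝ))]
        rw [if_neg hiu, if_pos hiv]
        ring
      · have hval : ∀ j, ind u v i j = 0 := by
          intro j
          exact ind_other (fun h => hiu h.1) (fun h => hiv h.1)
        rw [Finset.sum_congr rfl (fun j _ => hval j), Finset.sum_const, smul_zero]
        rw [if_neg hiu, if_neg hiv]
        ring
  rw [Finset.sum_congr rfl (fun i _ => he i), Finset.sum_add_distrib]
  rw [Finset.sum_ite_eq' A u, Finset.sum_ite_eq' A v]
  by_cases hu : u ∈ A <;> by_cases hv : v ∈ A <;>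
    by_cases hu' : u ∈ B <;> by_cases hv' : v ∈ B <;>
    simp [hu, hv, hu', hv']

/-- the alternating perturbation on the 4-cycle `p q r s`. -/
noncomputable def dmat (p q r s : Fin n) (i j : Fin n) : ℝ :=
  ind p q i j + ind r s i j - ind q r i j - ind s p i j

lemma sum_ind_univ {u v : Fin n} (huv : u ≠ v) (i : Fin n) :
    ∑ j, ind u v i j = (if u = i then (1 : ℝ) else 0) + (if v = i then 1 else 0) := by
  classical
  have h := sum_sum_ind huv {i} univ
  rw [Finset.sum_singleton] at h
  simpa using h

section Dmat

variable {p q r s : Fin n}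

lemma dmat_symm (i j : Fin n) : dmat p q r s i j = dmat p q r s j i := by
  unfold dmat
  rw [ind_symm p q i j, ind_symm r s i j, ind_symm q r i j, ind_symm s p i j]

lemma dmat_diag (hpq : p ≠ q) (hqr : q ≠ r) (hrs : r ≠ s) (hsp : s ≠ p) (i : Fin n) :
    dmat p q r s i i = 0 := by
  unfold dmat
  rw [ind_diag hpq, ind_diag hrs, ind_diag hqr, ind_diag hsp]
  ring

lemma dmat_row (hpq : p ≠ q) (hqr : q ≠ r) (hrs : r ≠ s) (hsp : s ≠ p) (i : Fin n) :
    ∑ j, dmat p q r s i j = 0 := by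
  classical
  unfold dmat
  simp only [Finset.sum_sub_distrib, Finset.sum_add_distrib]
  rw [sum_ind_univ hpq, sum_ind_univ hrs, sum_ind_univ hqr, sum_ind_univ hsp]
  ring

lemma dmat_cut (hpq : p ≠ q) (hqr : q ≠ r) (hrs : r ≠ s) (hsp : s ≠ p)
    (S : Finset (Fin n)) :
    ∑ i ∈ S, ∑ j ∈ Sᶜ, dmat p q r s i j =
      ((if p ∈ S ∧ q ∈ Sᶜ then (1 : ℝ) else 0) + (if q ∈ S ∧ p ∈ Sᶜ then 1 else 0))
      + ((if r ∈ S ∧ s ∈ Sᶜ then (1 : ℝ) else 0) + (if s ∈ S ∧ r ∈ Sᶜ then 1 else 0))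
      - ((if q ∈ S ∧ r ∈ Sᶜ then (1 : ℝ) else 0) + (if r ∈ S ∧ q ∈ Sᶜ then 1 else 0))
      - ((if s ∈ S ∧ p ∈ Sᶜ then (1 : ℝ) else 0) + (if p ∈ S ∧ s ∈ Sᶜ then 1 else 0)) := by
  classical
  unfold dmat
  simp only [Finset.sum_sub_distrib, Finset.sum_add_distrib]
  rw [sum_sum_ind hpq, sum_sum_ind hrs, sum_sum_ind hqr, sum_sum_ind hsp]

lemma cpair01 (S : Finset (Fin n)) (u v : Fin n) :
    0 ≤ (if u ∈ S ∧ v ∈ Sᶜ then (1 : ℝ) else 0) + (if v ∈ S ∧ u ∈ Sᶜ then 1 else 0) ∧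
    (if u ∈ S ∧ v ∈ Sᶜ then (1 : ℝ) else 0) + (if v ∈ S ∧ u ∈ Sᶜ then 1 else 0) ≤ 1 := by
  classical
  by_cases h1 : u ∈ S ∧ v ∈ Sᶜ <;> by_cases h2 : v ∈ S ∧ u ∈ Sᶜ
  · exact absurd h2.1 (Finset.mem_compl.1 h1.2)
  · rw [if_pos h1, if_neg h2]; norm_num
  · rw [if_neg h1, if_pos h2]; norm_num
  · rw [if_neg h1, if_neg h2]; norm_num

lemma dmat_cut_bound (hpq : p ≠ q) (hqr : q ≠ r) (hrs : r ≠ s) (hsp : s ≠ p)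
    (S : Finset (Fin n)) :
    |∑ i ∈ S, ∑ j ∈ Sᶜ, dmat p q r s i j| ≤ 2 := by
  rw [dmat_cut hpq hqr hrs hsp S, abs_le]
  obtain ⟨h1l, h1u⟩ := cpair01 S p q
  obtain ⟨h2l, h2u⟩ := cpair01 S r s
  obtain ⟨h3l, h3u⟩ := cpair01 S q r
  obtain ⟨h4l, h4u⟩ := cpair01 S s p
  constructor <;> linarith

lemma dmat_val_pq (hpq : p ≠ q) (hpr : p ≠ r) (hps : p ≠ s) (hqs : q ≠ s) :
    dmat p q r s p q = 1 := by
  unfold dmat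
  rw [ind_self,
    ind_other (fun h => hpr h.1) (fun h => hps h.1),
    ind_other (fun h => hpq h.1) (fun h => hpr h.1),
    ind_other (fun h => hps h.1) (fun h => hqs h.2)]
  ring

lemma dmat_val_rs (hpr : p ≠ r) (hqr : q ≠ r) (hqs : q ≠ s) (hrs : r ≠ s) :
    dmat p q r s r s = 1 := by
  unfold dmat
  rw [ind_other (fun h => hpr h.1.symm) (fun h => hqr h.1.symm),
    ind_self,
    ind_other (fun h => hqr h.1.symm) (fun h => hqs h.2.symm),
    ind_other (fun h => hrs h.1) (fun h => hpr h.1.symm)]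
  ring

lemma dmat_val_qr (hpq : p ≠ q) (hpr : p ≠ r) (hqr : q ≠ r) (hqs : q ≠ s) :
    dmat p q r s q r = -1 := by
  unfold dmat
  rw [ind_other (fun h => hpq h.1.symm) (fun h => hpr h.2.symm),
    ind_other (fun h => hqr h.1) (fun h => hqs h.1),
    (by classical exact if_pos (Or.inl ⟨rfl, rfl⟩) : ind q r q r = 1),
    ind_other (fun h => hqs h.1) (fun h => hpq h.1.symm)]
  ring

lemma dmat_val_sp (hpr : p ≠ r) (hps : p ≠ s) (hqs : q ≠ s) (hrs : r ≠ s) :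
    dmat p q r s s p = -1 := by
  unfold dmat
  rw [ind_other (fun h => hps h.1.symm) (fun h => hqs h.1.symm),
    ind_other (fun h => hrs h.1.symm) (fun h => hpr h.2),
    ind_other (fun h => hqs h.1.symm) (fun h => hrs h.1.symm),
    ind_self]
  ring

lemma dmat_zero_of_other (i j : Fin n)
    (h1 : ¬((i = p ∧ j = q) ∨ (i = q ∧ j = p)))
    (h2 : ¬((i = r ∧ j = s) ∨ (i = s ∧ j = r)))
    (h3 : ¬((i = q ∧ j = r) ∨ (i = r ∧ j = q)))
    (h4 : ¬((i = s ∧ j = p) ∨ (i = p ∧ j = s))) :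
    dmat p q r s i j = 0 := by
  unfold dmat
  rw [ind_other (fun h => h1 (Or.inl h)) (fun h => h1 (Or.inr h)),
    ind_other (fun h => h2 (Or.inl h)) (fun h => h2 (Or.inr h)),
    ind_other (fun h => h3 (Or.inl h)) (fun h => h3 (Or.inr h)),
    ind_other (fun h => h4 (Or.inl h)) (fun h => h4 (Or.inr h))]
  ring

lemma dmat_cases (hpq : p ≠ q) (hpr : p ≠ r) (hps : p ≠ s) (hqr : q ≠ r)
    (hqs : q ≠ s) (hrs : r ≠ s) (i j : Fin n) :
    dmat p q r s i j = 0 ∨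
    (dmat p q r s i j = 1 ∧
      ((i, j) = (p, q) ∨ (i, j) = (q, p) ∨ (i, j) = (r, s) ∨ (i, j) = (s, r))) ∨
    (dmat p q r s i j = -1 ∧
      ((i, j) = (q, r) ∨ (i, j) = (r, q) ∨ (i, j) = (s, p) ∨ (i, j) = (p, s))) := by
  classical
  by_cases h1 : (i = p ∧ j = q) ∨ (i = q ∧ j = p)
  · rcases h1 with ⟨rfl, rfl⟩ | ⟨rfl, rfl⟩
    · exact Or.inr (Or.inl ⟨dmat_val_pq hpq hpr hps hqs, Or.inl rfl⟩)
    · rw [dmat_symm]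
      exact Or.inr (Or.inl ⟨dmat_val_pq hpq hpr hps hqs, Or.inr (Or.inl rfl)⟩)
  · by_cases h2 : (i = r ∧ j = s) ∨ (i = s ∧ j = r)
    · rcases h2 with ⟨rfl, rfl⟩ | ⟨rfl, rfl⟩
      · exact Or.inr (Or.inl ⟨dmat_val_rs hpr hqr hqs hrs, Or.inr (Or.inr (Or.inl rfl))⟩)
      · rw [dmat_symm]
        exact Or.inr (Or.inl ⟨dmat_val_rs hpr hqr hqs hrs,
          Or.inr (Or.inr (Or.inr rfl))⟩)
    · by_cases h3 : (i = q ∧ j = r) ∨ (i = r ∧ j = q)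
      · rcases h3 with ⟨rfl, rfl⟩ | ⟨rfl, rfl⟩
        · exact Or.inr (Or.inr ⟨dmat_val_qr hpq hpr hqr hqs, Or.inl rfl⟩)
        · rw [dmat_symm]
          exact Or.inr (Or.inr ⟨dmat_val_qr hpq hpr hqr hqs, Or.inr (Or.inl rfl)⟩)
      · by_cases h4 : (i = s ∧ j = p) ∨ (i = p ∧ j = s)
        · rcases h4 with ⟨rfl, rfl⟩ | ⟨rfl, rfl⟩
          · exact Or.inr (Or.inr ⟨dmat_val_sp hpr hps hqs hrs,
              Or.inr (Or.inr (Or.inl rfl))⟩)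
          · rw [dmat_symm]
            exact Or.inr (Or.inr ⟨dmat_val_sp hpr hps hqs hrs,
              Or.inr (Or.inr (Or.inr rfl))⟩)
        · exact Or.inl (dmat_zero_of_other i j h1 h2 h3 h4)

end Dmat

lemma two_of_three (hsym : ∀ i j, x i j = x j i) (hdiag : ∀ i, x i i = 0)
    (hrow : ∀ v, (∑ j, x v j) = 2) (hbd : ∀ i j, 0 ≤ x i j ∧ x i j ≤ 1)
    {v u1 u2 : Fin n} (hv : v ∈ VF x) (hu1 : u1 ∈ VF x) (hu2 : u2 ∈ VF x)
    (h1 : u1 ≠ v) (h2 : u2 ≠ v) (h12 : u1 ≠ u2) (hVF4 : (VF x).card = 4) :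
    u1 ∈ fracNbrs x v ∨ u2 ∈ fracNbrs x v := by
  classical
  by_contra hcon
  push_neg at hcon
  obtain ⟨hn1, hn2⟩ := hcon
  have hsub : fracNbrs x v ⊆ (((VF x).erase v).erase u1).erase u2 := by
    intro j hj
    have hjVF : j ∈ VF x := fracNbrs_mem_VF hsym hj
    have hjv : j ≠ v := fracNbrs_ne hdiag hj
    have hj1 : j ≠ u1 := by rintro rfl; exact hn1 hj
    have hj2 : j ≠ u2 := by rintro rfl; exact hn2 hj
    exact Finset.mem_erase.2 ⟨hj2, Finset.mem_erase.2 ⟨hj1,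
      Finset.mem_erase.2 ⟨hjv, hjVF⟩⟩⟩
  have hm1 : u1 ∈ (VF x).erase v := Finset.mem_erase.2 ⟨h1, hu1⟩
  have hm2 : u2 ∈ ((VF x).erase v).erase u1 :=
    Finset.mem_erase.2 ⟨h12.symm, Finset.mem_erase.2 ⟨h2, hu2⟩⟩
  have hcard : ((((VF x).erase v).erase u1).erase u2).card = 1 := by
    rw [Finset.card_erase_of_mem hm2, Finset.card_erase_of_mem hm1,
      Finset.card_erase_of_mem hv, hVF4]
  have h2le : 2 ≤ (fracNbrs x v).card :=
    two_le_fracNbrs_card hrow hbd (mem_VF_iff.1 hv)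
  have := Finset.card_le_card hsub
  omega

set_option maxHeartbeats 1000000 in
lemma extract_cycle (hsym : ∀ i j, x i j = x j i) (hdiag : ∀ i, x i i = 0)
    (hrow : ∀ v, (∑ j, x v j) = 2) (hbd : ∀ i j, 0 ≤ x i j ∧ x i j ≤ 1)
    (hVF4 : (VF x).card = 4) :
    ∃ p q r s : Fin n, p ≠ q ∧ p ≠ r ∧ p ≠ s ∧ q ≠ r ∧ q ≠ s ∧ r ≠ s ∧
      q ∈ fracNbrs x p ∧ r ∈ fracNbrs x q ∧ s ∈ fracNbrs x r ∧ p ∈ fracNbrs x s ∧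
      (∀ i j : Fin n, x i j ≠ 1 → x i j ≠ 0 → (i = p ∨ i = q ∨ i = r ∨ i = s)) := by
  classical
  have hne : (VF x).Nonempty := Finset.card_pos.1 (by omega)
  obtain ⟨a, ha⟩ := hne
  have h3 : ((VF x).erase a).card = 3 := by rw [Finset.card_erase_of_mem ha, hVF4]
  obtain ⟨b, c, d, hbc, hbd', hcd, herase⟩ := Finset.card_eq_three.1 h3
  have hbmem : b ∈ (VF x).erase a := by rw [herase]; simp
  have hcmem : c ∈ (VF x).erase a := by rw [herase]; simp
  have hdmem : d ∈ (VF x).erase a := by rw [herase]; simp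
  have hb : b ∈ VF x := (Finset.mem_erase.1 hbmem).2
  have hc : c ∈ VF x := (Finset.mem_erase.1 hcmem).2
  have hd : d ∈ VF x := (Finset.mem_erase.1 hdmem).2
  have hab : a ≠ b := fun h => (Finset.mem_erase.1 hbmem).1 h.symm
  have hac : a ≠ c := fun h => (Finset.mem_erase.1 hcmem).1 h.symm
  have had : a ≠ d := fun h => (Finset.mem_erase.1 hdmem).1 h.symm
  have hVFmem : ∀ v ∈ VF x, v = a ∨ v = b ∨ v = c ∨ v = d := by
    intro v hv
    by_cases hva : v = a
    · exact Or.inl hva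
    · have : v ∈ (VF x).erase a := Finset.mem_erase.2 ⟨hva, hv⟩
      rw [herase] at this
      simp only [Finset.mem_insert, Finset.mem_singleton] at this
      tauto
  have hmem : ∀ i j : Fin n, x i j ≠ 1 → x i j ≠ 0 → i ∈ VF x :=
    fun i j h1 h0 => mem_VF_iff.2 ⟨j, mem_fracNbrs.2 ⟨h1, h0⟩⟩
  have t23 : ∀ {v u1 u2 : Fin n}, v ∈ VF x → u1 ∈ VF x → u2 ∈ VF x →
      u1 ≠ v → u2 ≠ v → u1 ≠ u2 → u1 ∈ fracNbrs x v ∨ u2 ∈ fracNbrs x v :=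
    fun hv hu1 hu2 h1 h2 h12 =>
      two_of_three hsym hdiag hrow hbd hv hu1 hu2 h1 h2 h12 hVF4
  have hmemconc : ∀ p' q' r' s' : Fin n,
      (∀ v, (v = a ∨ v = b ∨ v = c ∨ v = d) → (v = p' ∨ v = q' ∨ v = r' ∨ v = s')) →
      (∀ i j : Fin n, x i j ≠ 1 → x i j ≠ 0 → (i = p' ∨ i = q' ∨ i = r' ∨ i = s')) := by
    intro p' q' r' s' hperm i j h1 h0
    exact hperm i (hVFmem i (hmem i j h1 h0))
  by_cases hAB : b ∈ fracNbrs x a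
  · by_cases hCD : d ∈ fracNbrs x c
    · by_cases hBC : c ∈ fracNbrs x b
      · by_cases hDA : a ∈ fracNbrs x d
        · exact ⟨a, b, c, d, hab, hac, had, hbc, hbd', hcd, hAB, hBC, hCD, hDA,
            hmemconc a b c d (fun v h => h)⟩
        · have hAD' : d ∉ fracNbrs x a := fun h => hDA (fracNbrs_symm hsym h)
          have hDB : b ∈ fracNbrs x d :=
            (t23 hd ha hb had hbd' hab).resolve_left hDA
          have hAC : c ∈ fracNbrs x a :=
            (t23 ha hd hc (Ne.symm had) (Ne.symm hac) (Ne.symm hcd)).resolve_left hAD'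
          exact ⟨a, c, d, b, hac, had, hab, hcd, Ne.symm hbc, Ne.symm hbd',
            hAC, hCD, hDB, fracNbrs_symm hsym hAB,
            hmemconc a c d b (fun v h => by tauto)⟩
      · have hBC' : b ∉ fracNbrs x c := fun h => hBC (fracNbrs_symm hsym h)
        have hBD : d ∈ fracNbrs x b :=
          (t23 hb hc hd (Ne.symm hbc) (Ne.symm hbd') hcd).resolve_left hBC
        have hCA : a ∈ fracNbrs x c :=
          (t23 hc hb ha hbc hac (Ne.symm hab)).resolve_left hBC'
        exact ⟨a, b, d, c, hab, had, hac, hbd', hbc, Ne.symm hcd,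
          hAB, hBD, fracNbrs_symm hsym hCD, hCA,
          hmemconc a b d c (fun v h => by tauto)⟩
    · have hCD' : c ∉ fracNbrs x d := fun h => hCD (fracNbrs_symm hsym h)
      have hCA : a ∈ fracNbrs x c :=
        (t23 hc hd ha (Ne.symm hcd) hac (Ne.symm had)).resolve_left hCD
      have hCB : b ∈ fracNbrs x c :=
        (t23 hc hd hb (Ne.symm hcd) hbc (Ne.symm hbd')).resolve_left hCD
      have hDA : a ∈ fracNbrs x d :=
        (t23 hd hc ha hcd had (Ne.symm hac)).resolve_left hCD'
      have hDB : b ∈ fracNbrs x d :=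
        (t23 hd hc hb hcd hbd' (Ne.symm hbc)).resolve_left hCD'
      exact ⟨a, c, b, d, hac, hab, had, Ne.symm hbc, hcd, hbd',
        fracNbrs_symm hsym hCA, hCB, fracNbrs_symm hsym hDB, hDA,
        hmemconc a c b d (fun v h => by tauto)⟩
  · have hAB' : a ∉ fracNbrs x b := fun h => hAB (fracNbrs_symm hsym h)
    have hAC : c ∈ fracNbrs x a :=
      (t23 ha hb hc (Ne.symm hab) (Ne.symm hac) hbc).resolve_left hAB
    have hAD : d ∈ fracNbrs x a :=
      (t23 ha hb hd (Ne.symm hab) (Ne.symm had) hbd').resolve_left hAB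
    have hBC : c ∈ fracNbrs x b :=
      (t23 hb ha hc hab (Ne.symm hbc) hac).resolve_left hAB'
    have hBD : d ∈ fracNbrs x b :=
      (t23 hb ha hd hab (Ne.symm hbd') had).resolve_left hAB'
    exact ⟨a, c, b, d, hac, hab, had, Ne.symm hbc, hcd, hbd',
      hAC, fracNbrs_symm hsym hBC, hBD, fracNbrs_symm hsym hAD,
      hmemconc a c b d (fun v h => by tauto)⟩

lemma tight_pair_of_only (hsym : ∀ i j, x i j = x j i) (hdiag : ∀ i, x i i = 0)
    (hrow : ∀ v, (∑ j, x v j) = 2) (hbd : ∀ i j, 0 ≤ x i j ∧ x i j ≤ 1)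
    {u v w1 w2 : Fin n} (S : Finset (Fin n))
    (hu : u ∈ S) (hv : v ∈ S) (hw1 : w1 ∉ S) (hw2 : w2 ∉ S) (huv : u ≠ v)
    (hfr : x u v ≠ 1 ∧ x u v ≠ 0)
    (honly4 : ∀ i j : Fin n, x i j ≠ 1 → x i j ≠ 0 → (i = u ∨ i = v ∨ i = w1 ∨ i = w2))
    (htight : ∑ i ∈ S, ∑ j ∈ Sᶜ, x i j = 2) : False := by
  classical
  apply tight_pair hsym hdiag hrow hbd S huv hu hv hfr _ htight
  rintro ⟨i, j⟩ hmem
  simp only [fracIn, Finset.mem_filter, Finset.mem_product] at hmem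
  obtain ⟨⟨hiS, hjS⟩, h1, h0⟩ := hmem
  have hij : i ≠ j := by
    rintro rfl
    rw [hdiag] at h0
    exact h0 rfl
  have hi : i = u ∨ i = v := by
    rcases honly4 i j h1 h0 with h | h | h | h
    · exact Or.inl h
    · exact Or.inr h
    · exact absurd (h ▸ hiS) hw1
    · exact absurd (h ▸ hiS) hw2
  have hj : j = u ∨ j = v := by
    have h1' : x j i ≠ 1 := by rw [hsym j i]; exact h1
    have h0' : x j i ≠ 0 := by rw [hsym j i]; exact h0
    rcases honly4 j i h1' h0' with h | h | h | h
    · exact Or.inl h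
    · exact Or.inr h
    · exact absurd (h ▸ hjS) hw1
    · exact absurd (h ▸ hjS) hw2
  rcases hi with rfl | rfl
  · rcases hj with rfl | rfl
    · exact absurd rfl hij
    · exact Or.inl rfl
  · rcases hj with rfl | rfl
    · exact Or.inr rfl
    · exact absurd rfl hij

set_option maxHeartbeats 1000000 in
lemma key_tight (hsym : ∀ i j, x i j = x j i) (hdiag : ∀ i, x i i = 0)
    (hrow : ∀ v, (∑ j, x v j) = 2) (hbd : ∀ i j, 0 ≤ x i j ∧ x i j ≤ 1)
    {p q r s : Fin n}
    (hpq : p ≠ q) (hpr : p ≠ r) (hps : p ≠ s) (hqr : q ≠ r) (hqs : q ≠ s) (hrs : r ≠ s)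
    (hfpq : x p q ≠ 1 ∧ x p q ≠ 0) (hfqr : x q r ≠ 1 ∧ x q r ≠ 0)
    (hfrs : x r s ≠ 1 ∧ x r s ≠ 0) (hfsp : x s p ≠ 1 ∧ x s p ≠ 0)
    (honly4 : ∀ i j : Fin n, x i j ≠ 1 → x i j ≠ 0 → (i = p ∨ i = q ∨ i = r ∨ i = s))
    (S : Finset (Fin n)) (htight : ∑ i ∈ S, ∑ j ∈ Sᶜ, x i j = 2) :
    ∑ i ∈ S, ∑ j ∈ Sᶜ, dmat p q r s i j = 0 := by
  classical
  have hbad1 : ¬(p ∈ S ∧ q ∈ S ∧ r ∉ S ∧ s ∉ S) := by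
    rintro ⟨h1, h2, h3, h4⟩
    exact tight_pair_of_only hsym hdiag hrow hbd S h1 h2 h3 h4 hpq hfpq honly4 htight
  have hbad2 : ¬(q ∈ S ∧ r ∈ S ∧ p ∉ S ∧ s ∉ S) := by
    rintro ⟨h1, h2, h3, h4⟩
    exact tight_pair_of_only hsym hdiag hrow hbd S h1 h2 h3 h4 hqr hfqr
      (fun i j ha hb => by have := honly4 i j ha hb; tauto) htight
  have hbad3 : ¬(r ∈ S ∧ s ∈ S ∧ p ∉ S ∧ q ∉ S) := by
    rintro ⟨h1, h2, h3, h4⟩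
    exact tight_pair_of_only hsym hdiag hrow hbd S h1 h2 h3 h4 hrs hfrs
      (fun i j ha hb => by have := honly4 i j ha hb; tauto) htight
  have hbad4 : ¬(s ∈ S ∧ p ∈ S ∧ q ∉ S ∧ r ∉ S) := by
    rintro ⟨h1, h2, h3, h4⟩
    exact tight_pair_of_only hsym hdiag hrow hbd S h1 h2 h3 h4 (Ne.symm hps) hfsp
      (fun i j ha hb => by have := honly4 i j ha hb; tauto) htight
  rw [dmat_cut hpq hqr hrs (Ne.symm hps) S]
  by_cases hpS : p ∈ S <;> by_cases hqS : q ∈ S <;>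
    by_cases hrS : r ∈ S <;> by_cases hsS : s ∈ S <;>
    (simp only [Finset.mem_compl, hpS, hqS, hrS, hsS, not_true_eq_false,
        not_false_eq_true, and_true, and_false, true_and, false_and,
        if_true, if_false, ite_true, ite_false]
     try norm_num
     all_goals tauto)

set_option maxHeartbeats 2000000 in
lemma vf4_false (hP : InPSEP n x)
    (hvert : ∀ y₁ ∈ PSEP n, ∀ y₂ ∈ PSEP n, x ∈ openSegment ℝ y₁ y₂ → y₁ = x ∧ y₂ = x)
    (hVF4 : (VF x).card = 4) : False := by
  classical
  obtain ⟨hsym, hdiag, hrow, hcut, hbd⟩ := hP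
  obtain ⟨p, q, r, s, hpq, hpr, hps, hqr, hqs, hrs, hq, hr, hs, hp, honly4⟩ :=
    extract_cycle hsym hdiag hrow hbd hVF4
  have hfpq : x p q ≠ 1 ∧ x p q ≠ 0 := mem_fracNbrs.1 hq
  have hfqr : x q r ≠ 1 ∧ x q r ≠ 0 := mem_fracNbrs.1 hr
  have hfrs : x r s ≠ 1 ∧ x r s ≠ 0 := mem_fracNbrs.1 hs
  have hfsp : x s p ≠ 1 ∧ x s p ≠ 0 := mem_fracNbrs.1 hp
  have hfbnd : ∀ i j : Fin n, x i j ≠ 1 → x i j ≠ 0 → 0 < x i j ∧ x i j < 1 :=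
    fun i j h1 h0 =>
      ⟨lt_of_le_of_ne (hbd i j).1 (Ne.symm h0), lt_of_le_of_ne (hbd i j).2 h1⟩
  set cutv : Finset (Fin n) → ℝ := fun S => ∑ i ∈ S, ∑ j ∈ Sᶜ, x i j with hcutv
  set E : Finset ℝ := insert 1
    (({x p q, 1 - x p q, x q r, 1 - x q r, x r s, 1 - x r s, x s p, 1 - x s p} : Finset ℝ)
      ∪ ((univ : Finset (Fin n)).powerset.filter (fun S => 2 < cutv S)).image
          (fun S => (cutv S - 2) / 8)) with hE
  have hEne : E.Nonempty := ⟨1, Finset.mem_insert_self 1 _⟩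
  set ε := E.min' hEne with hεdef
  have hεpos : 0 < ε := by
    rw [hεdef]
    rw [Finset.lt_min'_iff]
    intro y hy
    rw [hE] at hy
    rcases Finset.mem_insert.1 hy with rfl | hy'
    · norm_num
    · rcases Finset.mem_union.1 hy' with hy2 | hy2
      · obtain ⟨h1, h2⟩ := hfbnd p q hfpq.1 hfpq.2
        obtain ⟨h3, h4⟩ := hfbnd q r hfqr.1 hfqr.2
        obtain ⟨h5, h6⟩ := hfbnd r s hfrs.1 hfrs.2
        obtain ⟨h7, h8⟩ := hfbnd s p hfsp.1 hfsp.2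
        simp only [Finset.mem_insert, Finset.mem_singleton] at hy2
        rcases hy2 with rfl | rfl | rfl | rfl | rfl | rfl | rfl | rfl <;> linarith
      · obtain ⟨S, hS, rfl⟩ := Finset.mem_image.1 hy2
        have h2S : 2 < cutv S := (Finset.mem_filter.1 hS).2
        linarith
  have hεle : ∀ z ∈ E, ε ≤ z := fun z hz => Finset.min'_le E z hz
  have hεpq : ε ≤ x p q := hεle _ (by rw [hE]; simp)
  have hεpq' : ε ≤ 1 - x p q := hεle _ (by rw [hE]; simp)
  have hεqr : ε ≤ x q r := hεle _ (by rw [hE]; simp)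
  have hεqr' : ε ≤ 1 - x q r := hεle _ (by rw [hE]; simp)
  have hεrs : ε ≤ x r s := hεle _ (by rw [hE]; simp)
  have hεrs' : ε ≤ 1 - x r s := hεle _ (by rw [hE]; simp)
  have hεsp : ε ≤ x s p := hεle _ (by rw [hE]; simp)
  have hεsp' : ε ≤ 1 - x s p := hεle _ (by rw [hE]; simp)
  have hsp' : s ≠ p := Ne.symm hps
  -- feasibility of the perturbed points
  have hfeas : ∀ t : ℝ, |t| ≤ ε →
      InPSEP n (fun i j => x i j + t * dmat p q r s i j) := by
    intro t ht
    have htl : -ε ≤ t := neg_le_of_abs_le ht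
    have htu : t ≤ ε := le_of_abs_le ht
    refine ⟨?_, ?_, ?_, ?_, ?_⟩
    · intro i j
      simp only
      rw [hsym i j, dmat_symm i j]
    · intro i
      simp only
      rw [hdiag i, dmat_diag hpq hqr hrs hsp' i]
      ring
    · intro v
      simp only
      rw [Finset.sum_add_distrib, ← Finset.mul_sum, dmat_row hpq hqr hrs hsp' v,
        hrow v]
      ring
    · intro S h3 h3'
      have hge : 2 ≤ cutv S := hcut S h3 h3'
      have hexp : ∑ i ∈ S, ∑ j ∈ Sᶜ, (x i j + t * dmat p q r s i j) =
          cutv S + t * ∑ i ∈ S, ∑ j ∈ Sᶜ, dmat p q r s i j := by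
        have hinner : ∀ i : Fin n, ∑ j ∈ Sᶜ, (x i j + t * dmat p q r s i j) =
            ∑ j ∈ Sᶜ, x i j + t * ∑ j ∈ Sᶜ, dmat p q r s i j := by
          intro i
          rw [Finset.sum_add_distrib, Finset.mul_sum]
        rw [Finset.sum_congr rfl (fun i _ => hinner i), Finset.sum_add_distrib,
          ← Finset.mul_sum]
      show 2 ≤ ∑ i ∈ S, ∑ j ∈ Sᶜ, (x i j + t * dmat p q r s i j)
      rw [hexp]
      rcases eq_or_lt_of_le hge with heq | hlt
      · rw [key_tight hsym hdiag hrow hbd hpq hpr hps hqr hqs hrs hfpq hfqr hfrs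
          hfsp honly4 S heq.symm]
        rw [mul_zero, add_zero]
        exact hge
      · have hmemE : (cutv S - 2) / 8 ∈ E := by
          rw [hE]
          apply Finset.mem_insert_of_mem
          apply Finset.mem_union_right
          exact Finset.mem_image.2 ⟨S, Finset.mem_filter.2
            ⟨Finset.mem_powerset.2 (Finset.subset_univ S), hlt⟩, rfl⟩
        have hεS : ε ≤ (cutv S - 2) / 8 := hεle _ hmemE
        have hDbd : |∑ i ∈ S, ∑ j ∈ Sᶜ, dmat p q r s i j| ≤ 2 :=
          dmat_cut_bound hpq hqr hrs hsp' S
        have habs : |t * ∑ i ∈ S, ∑ j ∈ Sᶜ, dmat p q r s i j| ≤ ε * 2 := by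
          rw [abs_mul]
          exact mul_le_mul ht hDbd (abs_nonneg _) (le_of_lt hεpos)
        have h1 := neg_abs_le (t * ∑ i ∈ S, ∑ j ∈ Sᶜ, dmat p q r s i j)
        linarith
    · intro i j
      simp only
      rcases dmat_cases hpq hpr hps hqr hqs hrs i j with h0 | ⟨h1, hpair⟩ | ⟨h1, hpair⟩
      · rw [h0, mul_zero, add_zero]
        exact hbd i j
      · rw [h1, mul_one]
        rcases hpair with h | h | h | h <;>
          (rw [Prod.ext_iff] at h; obtain ⟨hi, hj⟩ := h; simp only at hi hj;
            rw [hi, hj])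
        · constructor <;> linarith
        · rw [hsym q p]
          constructor <;> linarith
        · constructor <;> linarith
        · rw [hsym s r]
          constructor <;> linarith
      · rw [h1, mul_neg_one]
        rcases hpair with h | h | h | h <;>
          (rw [Prod.ext_iff] at h; obtain ⟨hi, hj⟩ := h; simp only at hi hj;
            rw [hi, hj])
        · constructor <;> linarith
        · rw [hsym r q]
          constructor <;> linarith
        · constructor <;> linarith
        · rw [hsym p s]
          constructor <;> linarith
  have hy1 : (fun i j => x i j + (-ε) * dmat p q r s i j) ∈ PSEP n :=
    hfeas (-ε) (by rw [abs_neg, abs_of_pos hεpos])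
  have hy2 : (fun i j => x i j + ε * dmat p q r s i j) ∈ PSEP n :=
    hfeas ε (by rw [abs_of_pos hεpos])
  have hseg : x ∈ openSegment ℝ
      (fun i j => x i j + (-ε) * dmat p q r s i j)
      (fun i j => x i j + ε * dmat p q r s i j) := by
    refine ⟨1/2, 1/2, by norm_num, by norm_num, by norm_num, ?_⟩
    funext i j
    simp only [Pi.add_apply, Pi.smul_apply, smul_eq_mul]
    ring
  have hconc := (hvert _ hy1 _ hy2 hseg).2
  have hval := congrFun (congrFun hconc p) q
  rw [dmat_val_pq hpq hpr hps hqs] at hval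
  have : ε * 1 = 0 := by linarith
  rw [mul_one] at this
  exact absurd this (ne_of_gt hεpos)

end FracVertexAux

/-- A fractional vertex of `P_SEP(n)` has at least `n + 3`
edges in its support graph. -/
theorem min_edges_of_fractional_vertex (n : ℕ) (hn : 3 ≤ n)
    (x : Fin n → Fin n → ℝ) (hx : IsVertex n x) (hfrac : IsFracPoint n x) :
    n + 3 ≤ supportSize n x := by
  classical
  open FracVertexAux in
  have hxP : x ∈ PSEP n := hx.1
  have hvert : ∀ y₁ ∈ PSEP n, ∀ y₂ ∈ PSEP n, x ∈ openSegment ℝ y₁ y₂ →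
      y₁ = x ∧ y₂ = x := (mem_extremePoints.1 hx).2
  have hP : InPSEP n x := hxP
  obtain ⟨hsym, hdiag, hrow, hcut, hbd⟩ := hP
  obtain ⟨i, j, hij, h0, h1⟩ := hfrac
  have hiVF : i ∈ FracVertexAux.VF x :=
    FracVertexAux.mem_VF_iff.2 ⟨j, FracVertexAux.mem_fracNbrs.2 ⟨h1, h0⟩⟩
  have h2le : 2 ≤ (FracVertexAux.fracNbrs x i).card :=
    FracVertexAux.two_le_fracNbrs_card hrow hbd (FracVertexAux.mem_VF_iff.1 hiVF)
  obtain ⟨j1, hj1, j2, hj2, hj12⟩ :=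
    Finset.one_lt_card.1 (by omega : 1 < (FracVertexAux.fracNbrs x i).card)
  have hj1VF : j1 ∈ FracVertexAux.VF x := FracVertexAux.fracNbrs_mem_VF hsym hj1
  have hj2VF : j2 ∈ FracVertexAux.VF x := FracVertexAux.fracNbrs_mem_VF hsym hj2
  have hj1i : j1 ≠ i := FracVertexAux.fracNbrs_ne hdiag hj1
  have hj2i : j2 ≠ i := FracVertexAux.fracNbrs_ne hdiag hj2
  have hsubset : ({i, j1, j2} : Finset (Fin n)) ⊆ FracVertexAux.VF x := by
    intro v hv
    simp only [Finset.mem_insert, Finset.mem_singleton] at hv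
    rcases hv with rfl | rfl | rfl
    · exact hiVF
    · exact hj1VF
    · exact hj2VF
  have hcard3 : ({i, j1, j2} : Finset (Fin n)).card = 3 := by
    rw [Finset.card_insert_of_notMem (by
      simp only [Finset.mem_insert, Finset.mem_singleton, not_or]
      exact ⟨Ne.symm hj1i, Ne.symm hj2i⟩),
      Finset.card_insert_of_notMem (by
        simp only [Finset.mem_singleton]
        exact hj12),
      Finset.card_singleton]
  have h3VF : 3 ≤ (FracVertexAux.VF x).card := by
    rw [← hcard3]
    exact Finset.card_le_card hsubset
  by_cases h5 : 5 ≤ (FracVertexAux.VF x).card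
  · exact FracVertexAux.count_conclusion hsym hdiag hrow hbd h5
  · have : (FracVertexAux.VF x).card = 3 ∨ (FracVertexAux.VF x).card = 4 := by omega
    rcases this with h | h
    · exact absurd h (fun h' =>
        FracVertexAux.vf3_false hsym hdiag hrow hbd h')
    · exact absurd h (fun h' =>
        FracVertexAux.vf4_false ⟨hsym, hdiag, hrow, hcut, hbd⟩ hvert h')
end

section
/- Let k be a positive integer and let x be a fractional vertex of P_SEP(n) whose support graph has exactly n + k edges and contains no node of degree 2 (i.e., x is an ancestor of order k). Then k + 3 ≤ n ≤ 2k. -/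
open Finset

namespace SEPaux


variable {n : ℕ}

noncomputable def cutF (y : Fin n → Fin n → ℝ) (S : Finset (Fin n)) : ℝ :=
  ∑ i ∈ S, ∑ j ∈ Sᶜ, y i j

lemma dsum_expand (y : Fin n → Fin n → ℝ) (A B : Finset (Fin n)) :
    ∑ i ∈ A, ∑ j ∈ B, y i j
      = ∑ i, ∑ j, if i ∈ A ∧ j ∈ B then y i j else 0 := by
  classical
  have h1 : ∑ i ∈ A, ∑ j ∈ B, y i j
      = ∑ i, if i ∈ A then (∑ j ∈ B, y i j) else 0 := by
    rw [Finset.sum_ite_mem, Finset.univ_inter]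
  rw [h1]
  refine Finset.sum_congr rfl fun i _ => ?_
  by_cases hi : i ∈ A
  · simp only [hi, if_true, true_and]
    rw [Finset.sum_ite_mem, Finset.univ_inter]
  · simp [hi]

lemma cutF_expand (y : Fin n → Fin n → ℝ) (S : Finset (Fin n)) :
    cutF y S = ∑ i, ∑ j, if i ∈ S ∧ j ∉ S then y i j else 0 := by
  classical
  rw [cutF, dsum_expand]
  simp [Finset.mem_compl]

/-- the uncrossing identity, valid for every `y`. -/
lemma uncross_identity (y : Fin n → Fin n → ℝ) (S T : Finset (Fin n)) :
    cutF y S + cutF y T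
      = cutF y (S ∩ T) + cutF y (S ∪ T)
        + (∑ i ∈ S \ T, ∑ j ∈ T \ S, y i j)
        + (∑ i ∈ T \ S, ∑ j ∈ S \ T, y i j) := by
  classical
  rw [cutF_expand y S, cutF_expand y T, cutF_expand y (S ∩ T), cutF_expand y (S ∪ T),
    dsum_expand y (S \ T) (T \ S), dsum_expand y (T \ S) (S \ T)]
  simp only [← Finset.sum_add_distrib]
  refine Finset.sum_congr rfl fun i _ => Finset.sum_congr rfl fun j _ => ?_
  by_cases hiS : i ∈ S <;> by_cases hjS : j ∈ S <;>
    by_cases hiT : i ∈ T <;> by_cases hjT : j ∈ T <;>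
    simp [hiS, hjS, hiT, hjT, Finset.mem_inter, Finset.mem_union, Finset.mem_sdiff]

lemma cutF_add_smul (y z : Fin n → Fin n → ℝ) (t : ℝ) (S : Finset (Fin n)) :
    cutF (fun i j => y i j + t * z i j) S = cutF y S + t * cutF z S := by
  simp [cutF, Finset.sum_add_distrib, Finset.mul_sum]

lemma cutF_compl (y : Fin n → Fin n → ℝ) (hsym : ∀ i j, y i j = y j i)
    (S : Finset (Fin n)) : cutF y Sᶜ = cutF y S := by
  classical
  rw [cutF, cutF, Finset.sum_comm, compl_compl]
  refine Finset.sum_congr rfl fun i _ => Finset.sum_congr rfl fun j _ => hsym j i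

lemma cutF_singleton (y : Fin n → Fin n → ℝ) (v : Fin n) :
    cutF y {v} = (∑ j, y v j) - y v v := by
  classical
  rw [cutF, Finset.sum_singleton]
  have := Finset.sum_add_sum_compl ({v} : Finset (Fin n)) (fun j => y v j)
  rw [Finset.sum_singleton] at this
  linarith

lemma cutF_pair (y : Fin n → Fin n → ℝ) {u v : Fin n} (huv : u ≠ v) :
    cutF y {u, v} = ((∑ j, y u j) - y u u - y u v)
      + ((∑ j, y v j) - y v u - y v v) := by
  classical
  rw [cutF, Finset.sum_pair huv]
  have hu := Finset.sum_add_sum_compl ({u, v} : Finset (Fin n)) (fun j => y u j)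
  have hv := Finset.sum_add_sum_compl ({u, v} : Finset (Fin n)) (fun j => y v j)
  rw [Finset.sum_pair huv] at hu hv
  linarith




variable {α : Type*} [DecidableEq α]

def Cross (S T : Finset α) : Prop := ¬ S ⊆ T ∧ ¬ T ⊆ S ∧ (S ∩ T).Nonempty

def LaminarF (L : Finset (Finset α)) : Prop := ∀ S ∈ L, ∀ T ∈ L, ¬ Cross S T

lemma cross_symm {S T : Finset α} (h : Cross S T) : Cross T S :=
  ⟨h.2.1, h.1, by rw [Finset.inter_comm]; exact h.2.2⟩

lemma not_cross_cases {S T : Finset α} (h : ¬ Cross S T) :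
    S ⊆ T ∨ T ⊆ S ∨ S ∩ T = ∅ := by
  by_cases h1 : S ⊆ T
  · exact Or.inl h1
  by_cases h2 : T ⊆ S
  · exact Or.inr (Or.inl h2)
  refine Or.inr (Or.inr ?_)
  by_contra h3
  exact h ⟨h1, h2, Finset.nonempty_iff_ne_empty.2 h3⟩

lemma cross_of_cross_inter {S T R : Finset α} (hRT : ¬ Cross R T)
    (h : Cross (S ∩ T) R) : Cross S R := by
  obtain ⟨h1, h2, h3⟩ := h
  rcases not_cross_cases hRT with hc | hc | hc
  · -- R ⊆ T
    refine ⟨?_, ?_, ?_⟩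
    · intro hSR
      exact h1 fun a ha => hSR (Finset.mem_inter.1 ha).1
    · intro hRS
      exact h2 (Finset.subset_inter hRS hc)
    · exact h3.mono (Finset.inter_subset_inter Finset.inter_subset_left (le_refl R))
  · -- T ⊆ R
    exact absurd (Finset.inter_subset_right.trans hc) h1
  · -- R ∩ T = ∅
    exfalso
    have hsub : (S ∩ T) ∩ R ⊆ R ∩ T := fun a ha => by
      simp only [Finset.mem_inter] at *
      exact ⟨ha.2, ha.1.2⟩
    rw [hc] at hsub
    obtain ⟨a, ha⟩ := h3
    exact absurd (hsub ha) (Finset.notMem_empty a)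

lemma cross_of_cross_union {S T R : Finset α} (hRT : ¬ Cross R T)
    (hST : Cross S T) (h : Cross (S ∪ T) R) : Cross S R := by
  obtain ⟨h1, h2, h3⟩ := h
  rcases not_cross_cases hRT with hc | hc | hc
  · -- R ⊆ T
    exact absurd (hc.trans Finset.subset_union_right) h2
  · -- T ⊆ R
    refine ⟨?_, ?_, ?_⟩
    · intro hSR
      exact h1 (Finset.union_subset hSR hc)
    · intro hRS
      exact hST.2.1 (hc.trans hRS)
    · exact hST.2.2.mono (Finset.inter_subset_inter (le_refl S) hc)
  · -- R ∩ T = ∅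
    refine ⟨?_, ?_, ?_⟩
    · intro hSR
      obtain ⟨a, ha⟩ := hST.2.2
      have : a ∈ R ∩ T := Finset.mem_inter.2
        ⟨hSR (Finset.mem_inter.1 ha).1, (Finset.mem_inter.1 ha).2⟩
      rw [hc] at this; exact absurd this (Finset.notMem_empty a)
    · intro hRS
      exact h2 (hRS.trans Finset.subset_union_left)
    · obtain ⟨a, ha⟩ := h3
      rcases Finset.mem_union.1 (Finset.mem_inter.1 ha).1 with haS | haT
      · exact ⟨a, Finset.mem_inter.2 ⟨haS, (Finset.mem_inter.1 ha).2⟩⟩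
      · exfalso
        have : a ∈ R ∩ T := Finset.mem_inter.2 ⟨(Finset.mem_inter.1 ha).2, haT⟩
        rw [hc] at this; exact absurd this (Finset.notMem_empty a)

lemma not_cross_inter_right {S T : Finset α} : ¬ Cross (S ∩ T) T :=
  fun h => h.1 Finset.inter_subset_right

lemma not_cross_union_right {S T : Finset α} : ¬ Cross (S ∪ T) T :=
  fun h => h.2.1 Finset.subset_union_right

/-- laminar families of nonempty sets inside `U` have at most `2|U| - 1` members -/
lemma laminar_card_le_aux (u : ℕ) : ∀ (U : Finset α) (L : Finset (Finset α)),
    U.card ≤ u → (∀ S ∈ L, S ⊆ U) → (∀ S ∈ L, S.Nonempty) → LaminarF L →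
    L.card ≤ 2 * U.card - 1 := by
  induction u with
  | zero =>
    intro U L hU hsub hne _
    have : L = ∅ := by
      rw [Finset.eq_empty_iff_forall_notMem]
      intro S hS
      obtain ⟨a, ha⟩ := hne S hS
      have := hsub S hS ha
      have hU0 : U = ∅ := Finset.card_eq_zero.1 (Nat.le_zero.1 hU)
      rw [hU0] at this; exact absurd this (Finset.notMem_empty a)
    simp [this]
  | succ u ih =>
    intro U L hU hsub hne hlam
    rcases Finset.eq_empty_or_nonempty L with hL | hL
    · simp [hL]
    have hUne : U.Nonempty := by
      obtain ⟨S, hS⟩ := hL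
      exact Finset.Nonempty.mono (hsub S hS) (hne S hS)
    have hU1 : 1 ≤ U.card := Finset.card_pos.2 hUne
    rcases Finset.eq_empty_or_nonempty (L.filter (fun S => S ≠ U)) with hF | hF
    · -- every member is U
      have : L ⊆ {U} := by
        intro S hS
        rcases eq_or_ne S U with h | h
        · simp [h]
        · exact absurd (Finset.mem_filter.2 ⟨hS, h⟩ :
            S ∈ L.filter (fun S => S ≠ U)) (by simp [hF])
      calc L.card ≤ ({U} : Finset (Finset α)).card := Finset.card_le_card this
        _ = 1 := Finset.card_singleton U
        _ ≤ 2 * U.card - 1 := by omega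
    · obtain ⟨M, hMmem, hMmax⟩ := Finset.exists_max_image (L.filter (fun S => S ≠ U)) Finset.card hF
      have hML : M ∈ L := (Finset.mem_filter.1 hMmem).1
      have hMneU : M ≠ U := (Finset.mem_filter.1 hMmem).2
      have hMU : M ⊆ U := hsub M hML
      have hMne : M.Nonempty := hne M hML
      have hMlt : M.card < U.card :=
        Finset.card_lt_card (Finset.ssubset_iff_subset_ne.2 ⟨hMU, hMneU⟩)
      have hM1 : 1 ≤ M.card := Finset.card_pos.2 hMne
      -- split
      have hsplit : ∀ S ∈ L, S ≠ U → S ⊆ M ∨ S ∩ M = ∅ := by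
        intro S hS hSneU
        rcases not_cross_cases (hlam S hS M hML) with h | h | h
        · exact Or.inl h
        · -- M ⊆ S : then by maximality S = M
          have hSc : S.card ≤ M.card :=
            hMmax S (Finset.mem_filter.2 ⟨hS, hSneU⟩)
          have : S = M := (Finset.eq_of_subset_of_card_le h hSc).symm
          exact Or.inl (this ▸ Finset.Subset.refl S)
        · exact Or.inr h
      set A := L.filter (· ⊆ M) with hA
      set B := L.filter (fun S => ¬ (S ⊆ M) ∧ S ≠ U) with hB
      have hLsub : L ⊆ A ∪ B ∪ {U} := by
        intro S hS
        simp only [Finset.mem_union, Finset.mem_singleton, hA, hB, Finset.mem_filter]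
        by_cases h1 : S ⊆ M
        · exact Or.inl (Or.inl ⟨hS, h1⟩)
        by_cases h2 : S = U
        · exact Or.inr h2
        · exact Or.inl (Or.inr ⟨hS, h1, h2⟩)
      have hAcard : A.card ≤ 2 * M.card - 1 := by
        refine ih M A (by omega) ?_ ?_ ?_
        · intro S hS; exact (Finset.mem_filter.1 hS).2
        · intro S hS; exact hne S (Finset.mem_filter.1 hS).1
        · intro S hS T hT
          exact hlam S (Finset.mem_filter.1 hS).1 T (Finset.mem_filter.1 hT).1
      have hBcard : B.card ≤ 2 * (U \ M).card - 1 := by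
        refine ih (U \ M) B ?_ ?_ ?_ ?_
        · have : (U \ M).card = U.card - M.card := Finset.card_sdiff_of_subset hMU
          omega
        · intro S hS
          obtain ⟨hSL, hSnM, hSneU⟩ :=
            by simpa only [hB, Finset.mem_filter] using hS
          have hdisj : S ∩ M = ∅ := by
            rcases hsplit S hSL hSneU with h | h
            · exact absurd h hSnM
            · exact h
          intro a ha
          refine Finset.mem_sdiff.2 ⟨hsub S hSL ha, fun haM => ?_⟩
          have : a ∈ S ∩ M := Finset.mem_inter.2 ⟨ha, haM⟩
          rw [hdisj] at this; exact absurd this (Finset.notMem_empty a)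
        · intro S hS; exact hne S (Finset.mem_filter.1 hS).1
        · intro S hS T hT
          exact hlam S (Finset.mem_filter.1 hS).1 T (Finset.mem_filter.1 hT).1
      have hsd : (U \ M).card = U.card - M.card := Finset.card_sdiff_of_subset hMU
      calc L.card ≤ (A ∪ B ∪ {U}).card := Finset.card_le_card hLsub
        _ ≤ (A ∪ B).card + 1 := by
          refine (Finset.card_union_le _ _).trans ?_; simp
        _ ≤ A.card + B.card + 1 := by
          have := Finset.card_union_le A B; omega
        _ ≤ 2 * U.card - 1 := by omega

lemma laminar_card_le (U : Finset α) (L : Finset (Finset α))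
    (hsub : ∀ S ∈ L, S ⊆ U) (hne : ∀ S ∈ L, S.Nonempty) (hlam : LaminarF L) :
    L.card ≤ 2 * U.card - 1 :=
  laminar_card_le_aux U.card U L (le_refl _) hsub hne hlam


section PolytopeFacts

variable {n : ℕ}

lemma cutx_ge {x : Fin n → Fin n → ℝ} (hx : InPSEP n x) {S : Finset (Fin n)}
    (hne : S.Nonempty) (hprop : S ≠ Finset.univ) : 2 ≤ cutF x S := by
  classical
  obtain ⟨hsym, hdiag, hdeg, hsub, hbd⟩ := hx
  have key : ∀ T : Finset (Fin n), T.card = 1 ∨ T.card = 2 → 2 ≤ cutF x T := by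
    intro T h
    rcases h with h | h
    · obtain ⟨v, rfl⟩ := Finset.card_eq_one.1 h
      rw [cutF_singleton, hdeg, hdiag]; norm_num
    · obtain ⟨u, v, huv, rfl⟩ := Finset.card_eq_two.1 h
      rw [cutF_pair x huv, hdeg, hdeg, hdiag, hdiag]
      have h1 := (hbd u v).2
      have h2 := hsym u v
      linarith
  have hc1 : 1 ≤ S.card := Finset.card_pos.2 hne
  have hclt : S.card < n := by
    have h := Finset.card_lt_card (Finset.ssubset_univ_iff.2 hprop)
    simpa [Finset.card_univ] using h
  by_cases h2 : S.card ≤ 2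
  · exact key S (by omega)
  by_cases h3 : S.card + 3 ≤ n
  · exact hsub S (by omega) h3
  · rw [← cutF_compl x hsym]
    refine key Sᶜ ?_
    have hcompl : Sᶜ.card = n - S.card := by
      simp [Finset.card_compl]
    omega

lemma direction_zero (n : ℕ) (hn : 3 ≤ n) (x : Fin n → Fin n → ℝ) (hx : IsVertex n x)
    (d : Fin n → Fin n → ℝ) (hdsym : ∀ i j, d i j = d j i)
    (hd0 : ∀ i j, x i j = 0 → d i j = 0)
    (hdc : ∀ S : Finset (Fin n), S.Nonempty → S ≠ Finset.univ → cutF x S = 2 →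
      cutF d S = 0) :
    d = 0 := by
  classical
  rw [IsVertex, mem_extremePoints] at hx
  obtain ⟨hmem, hext⟩ := hx
  obtain ⟨hsym, hdiag, hdeg, hsub, hbd⟩ := hmem
  have hsingne : ∀ v : Fin n, ({v} : Finset (Fin n)) ≠ Finset.univ := by
    intro v h
    have h' := congrArg Finset.card h
    simp [Finset.card_univ] at h'
    omega
  have hpairne : ∀ u v : Fin n, u ≠ v → ({u, v} : Finset (Fin n)) ≠ Finset.univ := by
    intro u v huv h
    have h' := congrArg Finset.card h
    rw [Finset.card_pair huv] at h'
    simp [Finset.card_univ] at h'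
    omega
  have hddiag : ∀ i, d i i = 0 := fun i => hd0 i i (hdiag i)
  have hrow : ∀ v, ∑ j, d v j = 0 := by
    intro v
    have h := hdc {v} (Finset.singleton_nonempty v) (hsingne v)
      (by rw [cutF_singleton, hdeg, hdiag]; norm_num)
    rw [cutF_singleton, hddiag] at h
    linarith
  have hone : ∀ i j, x i j = 1 → d i j = 0 := by
    intro i j hxij
    have hij : i ≠ j := by
      intro h; rw [h, hdiag] at hxij; norm_num at hxij
    have htight : cutF x {i, j} = 2 := by
      rw [cutF_pair x hij, hdeg, hdeg, hdiag, hdiag, hxij, ← hsym i j, hxij]; ring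
    have h := hdc {i, j} (Finset.insert_nonempty _ _) (hpairne i j hij) htight
    rw [cutF_pair d hij, hrow, hrow, hddiag, hddiag, hdsym j i] at h
    linarith
  -- choice of ε
  set E1 : Finset ℝ := Finset.univ.image (fun p : Fin n × Fin n =>
    if x p.1 p.2 = 0 ∨ x p.1 p.2 = 1 then 1
    else min (x p.1 p.2) (1 - x p.1 p.2) / (|d p.1 p.2| + 1)) with hE1
  set E2 : Finset ℝ := Finset.univ.image (fun S : Finset (Fin n) =>
    if cutF x S ≤ 2 then 1 else (cutF x S - 2) / (|cutF d S| + 1)) with hE2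
  set E : Finset ℝ := insert 1 (E1 ∪ E2) with hE
  have hEne : E.Nonempty := ⟨1, by simp [hE]⟩
  set ε : ℝ := E.min' hEne with hEps
  have hpos : 0 < ε := by
    rw [hEps]
    refine (Finset.lt_min'_iff E hEne).2 ?_
    intro b hb
    rw [hE] at hb
    rcases Finset.mem_insert.1 hb with rfl | hb
    · norm_num
    rcases Finset.mem_union.1 hb with hb | hb
    · obtain ⟨p, -, rfl⟩ := Finset.mem_image.1 hb
      split_ifs with h
      · norm_num
      · push_neg at h
        have h0 := (hbd p.1 p.2).1
        have h1 := (hbd p.1 p.2).2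
        have hlt : 0 < min (x p.1 p.2) (1 - x p.1 p.2) := by
          refine lt_min (lt_of_le_of_ne h0 (Ne.symm h.1)) ?_
          have := lt_of_le_of_ne h1 h.2
          linarith
        exact div_pos hlt (by positivity)
    · obtain ⟨S, -, rfl⟩ := Finset.mem_image.1 hb
      split_ifs with h
      · norm_num
      · push_neg at h
        exact div_pos (by linarith) (by positivity)
  have hεle : ∀ b ∈ E, ε ≤ b := fun b hb => Finset.min'_le E b hb
  have hfeas : ∀ t : ℝ, |t| ≤ ε → InPSEP n (x + t • d) := by
    intro t ht
    have hentry : ∀ i j, (x + t • d) i j = x i j + t * d i j := fun i j => rfl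
    refine ⟨?_, ?_, ?_, ?_, ?_⟩
    · intro i j; rw [hentry, hentry, hsym i j, hdsym i j]
    · intro i; rw [hentry, hdiag, hddiag]; ring
    · intro v
      calc ∑ j, (x + t • d) v j = ∑ j, (x v j + t * d v j) := rfl
        _ = (∑ j, x v j) + t * ∑ j, d v j := by
            rw [Finset.sum_add_distrib, Finset.mul_sum]
        _ = 2 := by rw [hdeg, hrow]; ring
    · intro S h3 hn3
      have hSne : S.Nonempty := Finset.card_pos.1 (by omega)
      have hSneu : S ≠ Finset.univ := by
        intro h
        have h' := congrArg Finset.card h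
        simp [Finset.card_univ] at h'
        omega
      show 2 ≤ cutF (x + t • d) S
      have hcut : cutF (x + t • d) S = cutF x S + t * cutF d S := by
        have hfun : (x + t • d) = (fun i j => x i j + t * d i j) := rfl
        rw [hfun, cutF_add_smul]
      rw [hcut]
      by_cases htight : cutF x S = 2
      · rw [hdc S hSne hSneu htight, htight]; norm_num
      · have hge : 2 ≤ cutF x S := hsub S h3 hn3
        have hgt : 2 < cutF x S := lt_of_le_of_ne hge (Ne.symm htight)
        have hmem2 : ((cutF x S - 2) / (|cutF d S| + 1)) ∈ E := by
          rw [hE]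
          refine Finset.mem_insert_of_mem (Finset.mem_union_right _ ?_)
          rw [hE2]
          exact Finset.mem_image.2 ⟨S, Finset.mem_univ S, by rw [if_neg (not_le.2 hgt)]⟩
        have hεb := hεle _ hmem2
        have hd1 : (0:ℝ) < |cutF d S| + 1 := by positivity
        have h2' : ε * (|cutF d S| + 1) ≤ cutF x S - 2 := (le_div_iff₀ hd1).1 hεb
        have h1' : |t| * |cutF d S| ≤ ε * (|cutF d S| + 1) := by
          have ha : |cutF d S| ≤ |cutF d S| + 1 := by linarith
          have := mul_le_mul ht ha (abs_nonneg _) (le_of_lt hpos)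
          linarith
        have habs : |t * cutF d S| ≤ cutF x S - 2 := by
          rw [abs_mul]; linarith
        have := neg_abs_le (t * cutF d S)
        linarith
    · intro i j
      rw [hentry]
      by_cases h0 : x i j = 0
      · rw [h0, hd0 i j h0]
        norm_num
      by_cases h1 : x i j = 1
      · rw [h1, hone i j h1]
        norm_num
      · have hb0 := (hbd i j).1
        have hb1 := (hbd i j).2
        have hmem1 : (min (x i j) (1 - x i j) / (|d i j| + 1)) ∈ E := by
          rw [hE]
          refine Finset.mem_insert_of_mem (Finset.mem_union_left _ ?_)
          rw [hE1]
          refine Finset.mem_image.2 ⟨(i, j), Finset.mem_univ _, ?_⟩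
          rw [if_neg (by push_neg; exact ⟨h0, h1⟩)]
        have hεb := hεle _ hmem1
        have hd1 : (0:ℝ) < |d i j| + 1 := by positivity
        have h2' : ε * (|d i j| + 1) ≤ min (x i j) (1 - x i j) := (le_div_iff₀ hd1).1 hεb
        have h1' : |t| * |d i j| ≤ ε * (|d i j| + 1) := by
          have ha : |d i j| ≤ |d i j| + 1 := by linarith
          have := mul_le_mul ht ha (abs_nonneg _) (le_of_lt hpos)
          linarith
        have habs : |t * d i j| ≤ min (x i j) (1 - x i j) := by
          rw [abs_mul]; linarith
        have hminl := min_le_left (x i j) (1 - x i j)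
        have hminr := min_le_right (x i j) (1 - x i j)
        have hna := neg_abs_le (t * d i j)
        have hpa := le_abs_self (t * d i j)
        constructor <;> linarith
  have hy := hfeas ε (by rw [abs_of_pos hpos])
  have hz := hfeas (-ε) (by rw [abs_neg, abs_of_pos hpos])
  have hseg : x ∈ openSegment ℝ (x + ε • d) (x + (-ε) • d) := by
    refine ⟨1/2, 1/2, by norm_num, by norm_num, by norm_num, ?_⟩
    funext i j
    simp only [Pi.add_apply, Pi.smul_apply, smul_eq_mul]
    ring
  obtain ⟨h1, -⟩ := hext (x + ε • d) hy (x + (-ε) • d) hz hseg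
  have hzero : ε • d = 0 := by
    have := h1
    rwa [add_eq_left] at this
  exact (smul_eq_zero.mp hzero).resolve_left (ne_of_gt hpos)

end PolytopeFacts

section Handshake

variable {n : ℕ}

lemma suppDegree_two_le (x : Fin n → Fin n → ℝ) (hmem : InPSEP n x) (v : Fin n) :
    2 ≤ suppDegree n x v := by
  classical
  obtain ⟨hsym, hdiag, hdeg, hsub, hbd⟩ := hmem
  by_contra hlt
  push_neg at hlt
  set A := Finset.univ.filter (fun j => j ≠ v ∧ x v j ≠ 0) with hA
  have hcard : A.card ≤ 1 := by
    have h : suppDegree n x v = A.card := by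
      rw [suppDegree, hA]
    omega
  have hsum : ∑ j, x v j = ∑ j ∈ A, x v j := by
    symm
    apply Finset.sum_subset (Finset.subset_univ A)
    intro j _ hj
    rw [hA] at hj
    simp only [Finset.mem_filter, Finset.mem_univ, true_and] at hj
    push_neg at hj
    by_cases hjv : j = v
    · rw [hjv]; exact hdiag v
    · exact hj hjv
  have hle : ∑ j ∈ A, x v j ≤ ∑ j ∈ A, (1:ℝ) :=
    Finset.sum_le_sum (fun j _ => (hbd v j).2)
  rw [Finset.sum_const, nsmul_eq_mul, mul_one] at hle
  rw [hdeg v] at hsum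
  have : (A.card : ℝ) ≤ 1 := by exact_mod_cast hcard
  linarith

lemma sum_suppDegree (x : Fin n → Fin n → ℝ) (hsym : ∀ i j, x i j = x j i) :
    ∑ v, suppDegree n x v = 2 * supportSize n x := by
  classical
  set P := Finset.univ.filter (fun p : Fin n × Fin n => p.2 ≠ p.1 ∧ x p.1 p.2 ≠ 0) with hP
  have h1 : P.card = ∑ v, suppDegree n x v := by
    rw [Finset.card_eq_sum_card_fiberwise
      (f := Prod.fst) (t := Finset.univ) (fun p _ => Finset.mem_univ _)]
    refine Finset.sum_congr rfl fun v _ => ?_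
    have himg : P.filter (fun p => p.1 = v)
        = (Finset.univ.filter (fun j => j ≠ v ∧ x v j ≠ 0)).image (fun j => (v, j)) := by
      ext ⟨a, b⟩
      simp only [hP, Finset.mem_filter, Finset.mem_univ, true_and, Finset.mem_image,
        Finset.filter_filter, Prod.mk.injEq]
      constructor
      · rintro ⟨⟨hne, hx0⟩, rfl⟩
        exact ⟨b, ⟨hne, hx0⟩, rfl, rfl⟩
      · rintro ⟨j, ⟨hne, hx0⟩, rfl, rfl⟩
        exact ⟨⟨hne, hx0⟩, rfl⟩
    rw [himg, Finset.card_image_of_injective _ (fun a b h => by injection h),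
      suppDegree]
  have h2 : P.card = 2 * supportSize n x := by
    set σ1 := Finset.univ.filter (fun p : Fin n × Fin n => p.1 < p.2 ∧ x p.1 p.2 ≠ 0) with hσ1
    set σ2 := Finset.univ.filter (fun p : Fin n × Fin n => p.2 < p.1 ∧ x p.1 p.2 ≠ 0) with hσ2
    have hunion : P = σ1 ∪ σ2 := by
      ext ⟨a, b⟩
      simp only [hP, hσ1, hσ2, Finset.mem_filter, Finset.mem_univ, true_and, Finset.mem_union]
      constructor
      · rintro ⟨hne, hx0⟩
        rcases hne.lt_or_gt with h | h
        · exact Or.inr ⟨h, hx0⟩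
        · exact Or.inl ⟨h, hx0⟩
      · rintro (⟨h, hx0⟩ | ⟨h, hx0⟩)
        · exact ⟨ne_of_gt h, hx0⟩
        · exact ⟨ne_of_lt h, hx0⟩
    have hdisj : Disjoint σ1 σ2 := by
      rw [Finset.disjoint_left]
      rintro ⟨a, b⟩ h1' h2'
      simp only [hσ1, hσ2, Finset.mem_filter] at h1' h2'
      exact absurd h2'.2.1 (not_lt.2 (le_of_lt h1'.2.1))
    have hswap : σ2 = σ1.image Prod.swap := by
      ext ⟨a, b⟩
      simp only [hσ1, hσ2, Finset.mem_filter, Finset.mem_univ, true_and, Finset.mem_image,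
        Prod.exists, Prod.swap_prod_mk, Prod.mk.injEq]
      constructor
      · rintro ⟨h, hx0⟩
        exact ⟨b, a, ⟨h, by rw [hsym b a]; exact hx0⟩, rfl, rfl⟩
      · rintro ⟨c, d, ⟨h, hx0⟩, rfl, rfl⟩
        exact ⟨h, by rw [hsym]; exact hx0⟩
    have hsupp' : supportSize n x = σ1.card := by
      rw [supportSize, hσ1]
    rw [hunion, Finset.card_union_of_disjoint hdisj, hswap,
      Finset.card_image_of_injective _ Prod.swap_injective, hsupp']
    ring
  omega

end Handshake

section DM

variable {n : ℕ}

noncomputable def dm (σ : Finset (Fin n × Fin n)) (y : {p // p ∈ σ} → ℝ) :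
    Fin n → Fin n → ℝ :=
  fun i j =>
    if h : (i, j) ∈ σ then y ⟨(i, j), h⟩
    else if h' : (j, i) ∈ σ then y ⟨(j, i), h'⟩ else 0

lemma cutF_add (y z : Fin n → Fin n → ℝ) (S : Finset (Fin n)) :
    cutF (fun i j => y i j + z i j) S = cutF y S + cutF z S := by
  simp [cutF, Finset.sum_add_distrib]

lemma cutF_smul (c : ℝ) (y : Fin n → Fin n → ℝ) (S : Finset (Fin n)) :
    cutF (fun i j => c * y i j) S = c * cutF y S := by
  simp [cutF, Finset.mul_sum]

lemma dm_add (σ : Finset (Fin n × Fin n)) (y z : {p // p ∈ σ} → ℝ) :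
    dm σ (y + z) = fun i j => dm σ y i j + dm σ z i j := by
  funext i j
  unfold dm
  split_ifs <;> simp

lemma dm_smul (σ : Finset (Fin n × Fin n)) (c : ℝ) (y : {p // p ∈ σ} → ℝ) :
    dm σ (c • y) = fun i j => c * dm σ y i j := by
  funext i j
  unfold dm
  split_ifs <;> simp

lemma dm_symm (σ : Finset (Fin n × Fin n)) (hσ : ∀ p ∈ σ, p.1 < p.2)
    (y : {p // p ∈ σ} → ℝ) (i j : Fin n) : dm σ y i j = dm σ y j i := by
  unfold dm
  by_cases h1 : (i, j) ∈ σ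
  · have h2 : (j, i) ∉ σ := fun hc =>
      absurd (hσ _ hc) (not_lt.2 (le_of_lt (hσ _ h1)))
    rw [dif_pos h1, dif_neg h2, dif_pos h1]
  · by_cases h2 : (j, i) ∈ σ
    · rw [dif_neg h1, dif_pos h2, dif_pos h2]
    · rw [dif_neg h1, dif_neg h2, dif_neg h2, dif_neg h1]

lemma dm_zero (σ : Finset (Fin n × Fin n)) {x : Fin n → Fin n → ℝ}
    (hσx : ∀ p ∈ σ, x p.1 p.2 ≠ 0) (hsym : ∀ i j, x i j = x j i)
    (y : {p // p ∈ σ} → ℝ) (i j : Fin n) (hx0 : x i j = 0) : dm σ y i j = 0 := by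
  unfold dm
  have h1 : (i, j) ∉ σ := fun hc => hσx _ hc hx0
  have h2 : (j, i) ∉ σ := fun hc => hσx _ hc (by rw [← hsym i j]; exact hx0)
  rw [dif_neg h1, dif_neg h2]

lemma dm_apply_mem (σ : Finset (Fin n × Fin n)) (y : {p // p ∈ σ} → ℝ)
    {p : Fin n × Fin n} (hp : p ∈ σ) : dm σ y p.1 p.2 = y ⟨p, hp⟩ := by
  unfold dm
  exact dif_pos hp

noncomputable def cutMap (σ : Finset (Fin n × Fin n)) (L : Finset (Finset (Fin n))) :
    ({p // p ∈ σ} → ℝ) →ₗ[ℝ] ({T // T ∈ L} → ℝ) where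
  toFun y := fun T => cutF (dm σ y) T.1
  map_add' y z := by
    funext T
    simp only [Pi.add_apply]
    rw [dm_add σ y z, cutF_add]
  map_smul' c y := by
    funext T
    simp only [Pi.smul_apply, RingHom.id_apply, smul_eq_mul]
    rw [dm_smul σ c y, cutF_smul]

end DM

end SEPaux

/-- If `x` is an ancestor of order `k` (a fractional vertex of
`P_SEP(n)` with exactly `n + k` edges in its support graph and no node of
degree `2`), then `k + 3 ≤ n ≤ 2k`. -/
theorem ancestor_dimension_bounds (n k : ℕ) (hn : 3 ≤ n) (hk : 0 < k)
    (x : Fin n → Fin n → ℝ) (hx : IsVertex n x) (hfrac : IsFracPoint n x)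
    (hsupp : supportSize n x = n + k) (hdeg : ∀ v, suppDegree n x v ≠ 2) :
    k + 3 ≤ n ∧ n ≤ 2 * k := by
  classical
  have hmem : InPSEP n x := (mem_extremePoints.1 hx).1
  obtain ⟨hsym, hdiag, hdegc, hsub, hbd⟩ := hmem
  have hmem : InPSEP n x := ⟨hsym, hdiag, hdegc, hsub, hbd⟩
  -- Part A : every node has support-degree at least 3, hence 3n ≤ 2(n+k)
  have hA : n ≤ 2 * k := by
    have h3 : ∀ v, 3 ≤ suppDegree n x v := by
      intro v
      have h2 := SEPaux.suppDegree_two_le x hmem v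
      have := hdeg v
      omega
    have hsum : 3 * n ≤ ∑ v, suppDegree n x v := by
      calc 3 * n = ∑ _v : Fin n, 3 := by
            rw [Finset.sum_const, Finset.card_univ, Fintype.card_fin, smul_eq_mul]; ring
        _ ≤ ∑ v, suppDegree n x v := Finset.sum_le_sum (fun v _ => h3 v)
    rw [SEPaux.sum_suppDegree x hsym, hsupp] at hsum
    omega
  refine ⟨?_, hA⟩
  -- Part B : a vertex has at most 2n-3 support edges
  set v0 : Fin n := ⟨0, by omega⟩ with hv0
  set U : Finset (Fin n) := Finset.univ.erase v0 with hU
  have hUcard : U.card = n - 1 := by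
    rw [hU, Finset.card_erase_of_mem (Finset.mem_univ v0), Finset.card_univ, Fintype.card_fin]
  have hUniv : ∀ S : Finset (Fin n), S ⊆ U → S ≠ Finset.univ := by
    intro S hSU h
    have hv : v0 ∈ S := h ▸ Finset.mem_univ v0
    have := hSU hv
    rw [hU] at this
    exact absurd this (Finset.notMem_erase v0 _)
  set 𝒯 : Finset (Finset (Fin n)) :=
    U.powerset.filter (fun S => S.Nonempty ∧ SEPaux.cutF x S = 2) with h𝒯
  have h𝒯mem : ∀ S ∈ 𝒯, S ⊆ U ∧ S.Nonempty ∧ SEPaux.cutF x S = 2 := by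
    intro S hS
    rw [h𝒯, Finset.mem_filter, Finset.mem_powerset] at hS
    exact ⟨hS.1, hS.2.1, hS.2.2⟩
  set Fam : Finset (Finset (Finset (Fin n))) :=
    𝒯.powerset.filter (fun L => SEPaux.LaminarF L) with hFam
  have hFamne : Fam.Nonempty :=
    ⟨∅, Finset.mem_filter.2 ⟨Finset.empty_mem_powerset _,
      fun S hS => absurd hS (Finset.notMem_empty S)⟩⟩
  obtain ⟨L, hLmem, hLmax⟩ := Finset.exists_max_image Fam Finset.card hFamne
  rw [hFam, Finset.mem_filter, Finset.mem_powerset] at hLmem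
  obtain ⟨hLsub, hLlam⟩ := hLmem
  have hLcard : L.card ≤ 2 * (n - 1) - 1 := by
    have h := SEPaux.laminar_card_le U L (fun S hS => (h𝒯mem S (hLsub hS)).1)
      (fun S hS => (h𝒯mem S (hLsub hS)).2.1) hLlam
    rwa [hUcard] at h
  set σ : Finset (Fin n × Fin n) :=
    Finset.univ.filter (fun p : Fin n × Fin n => p.1 < p.2 ∧ x p.1 p.2 ≠ 0) with hσdef
  have hσcard : σ.card = n + k := by
    rw [← hsupp, supportSize, hσdef]
  have hσlt : ∀ p ∈ σ, p.1 < p.2 := by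
    intro p hp; rw [hσdef, Finset.mem_filter] at hp; exact hp.2.1
  have hσx : ∀ p ∈ σ, x p.1 p.2 ≠ 0 := by
    intro p hp; rw [hσdef, Finset.mem_filter] at hp; exact hp.2.2
  -- the cut map on L is injective
  have hinj : Function.Injective (SEPaux.cutMap σ L) := by
    rw [injective_iff_map_eq_zero]
    intro y hy
    have hyT : ∀ T ∈ L, SEPaux.cutF (SEPaux.dm σ y) T = 0 := by
      intro T hT
      have h := congrFun hy ⟨T, hT⟩
      simpa [SEPaux.cutMap] using h
    have key : ∀ c : ℕ, ∀ S ∈ 𝒯, (L.filter (fun T => SEPaux.Cross S T)).card ≤ c →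
        SEPaux.cutF (SEPaux.dm σ y) S = 0 := by
      intro c
      induction c with
      | zero =>
        intro S hS hc
        have hfe : L.filter (fun T => SEPaux.Cross S T) = ∅ :=
          Finset.card_eq_zero.1 (Nat.le_zero.1 hc)
        have hnc : ∀ T ∈ L, ¬ SEPaux.Cross S T := by
          intro T hT hcr
          have hmem' : T ∈ L.filter (fun T => SEPaux.Cross S T) :=
            Finset.mem_filter.2 ⟨hT, hcr⟩
          rw [hfe] at hmem'
          exact absurd hmem' (Finset.notMem_empty T)
        have hlam' : SEPaux.LaminarF (insert S L) := by
          intro S1 hS1 T1 hT1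
          rcases Finset.mem_insert.1 hS1 with hS1' | hS1'
          · rcases Finset.mem_insert.1 hT1 with hT1' | hT1'
            · exact fun h => h.1 (by rw [hS1', hT1'])
            · rw [hS1']; exact hnc T1 hT1'
          · rcases Finset.mem_insert.1 hT1 with hT1' | hT1'
            · rw [hT1']; exact fun h => hnc S1 hS1' (SEPaux.cross_symm h)
            · exact hLlam S1 hS1' T1 hT1'
        have hSinL : S ∈ L := by
          by_contra hSnot
          have hins : insert S L ∈ Fam := by
            rw [hFam, Finset.mem_filter, Finset.mem_powerset]
            exact ⟨Finset.insert_subset hS hLsub, hlam'⟩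
          have hle := hLmax _ hins
          rw [Finset.card_insert_of_notMem hSnot] at hle
          omega
        exact hyT S hSinL
      | succ c ih =>
        intro S hS hc
        by_cases hcc : (L.filter (fun T => SEPaux.Cross S T)).card ≤ c
        · exact ih S hS hcc
        push_neg at hcc
        have hfne : (L.filter (fun T => SEPaux.Cross S T)).Nonempty :=
          Finset.card_pos.1 (by omega)
        obtain ⟨T, hTf⟩ := hfne
        obtain ⟨hTL, hcross⟩ := Finset.mem_filter.1 hTf
        have hT𝒯 := hLsub hTL
        obtain ⟨hTU, hTne, hTtight⟩ := h𝒯mem T hT𝒯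
        obtain ⟨hSU, hSne, hStight⟩ := h𝒯mem S hS
        have hAU : S ∩ T ⊆ U := Finset.inter_subset_left.trans hSU
        have hBU : S ∪ T ⊆ U := Finset.union_subset hSU hTU
        have hAne : (S ∩ T).Nonempty := hcross.2.2
        have hBne : (S ∪ T).Nonempty := hSne.mono Finset.subset_union_left
        have hid := SEPaux.uncross_identity x S T
        have hAge : 2 ≤ SEPaux.cutF x (S ∩ T) := SEPaux.cutx_ge hmem hAne (hUniv _ hAU)
        have hBge : 2 ≤ SEPaux.cutF x (S ∪ T) := SEPaux.cutx_ge hmem hBne (hUniv _ hBU)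
        have hc1 : 0 ≤ ∑ i ∈ S \ T, ∑ j ∈ T \ S, x i j :=
          Finset.sum_nonneg fun i _ => Finset.sum_nonneg fun j _ => (hbd i j).1
        have hc2 : 0 ≤ ∑ i ∈ T \ S, ∑ j ∈ S \ T, x i j :=
          Finset.sum_nonneg fun i _ => Finset.sum_nonneg fun j _ => (hbd i j).1
        rw [hStight, hTtight] at hid
        have hAt : SEPaux.cutF x (S ∩ T) = 2 := by linarith
        have hBt : SEPaux.cutF x (S ∪ T) = 2 := by linarith
        have hcz1 : ∀ i ∈ S \ T, ∀ j ∈ T \ S, x i j = 0 := by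
          have hzz : ∑ i ∈ S \ T, ∑ j ∈ T \ S, x i j = 0 := by linarith
          intro i hi j hj
          have h1 := (Finset.sum_eq_zero_iff_of_nonneg
            (fun i _ => Finset.sum_nonneg (fun j _ => (hbd i j).1))).1 hzz i hi
          exact (Finset.sum_eq_zero_iff_of_nonneg (fun j _ => (hbd i j).1)).1 h1 j hj
        have hdc1 : ∑ i ∈ S \ T, ∑ j ∈ T \ S, SEPaux.dm σ y i j = 0 :=
          Finset.sum_eq_zero fun i hi => Finset.sum_eq_zero fun j hj =>
            SEPaux.dm_zero σ hσx hsym y i j (hcz1 i hi j hj)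
        have hdc2 : ∑ i ∈ T \ S, ∑ j ∈ S \ T, SEPaux.dm σ y i j = 0 :=
          Finset.sum_eq_zero fun i hi => Finset.sum_eq_zero fun j hj =>
            SEPaux.dm_zero σ hσx hsym y i j
              (by rw [hsym i j]; exact hcz1 j hj i hi)
        have hidd := SEPaux.uncross_identity (SEPaux.dm σ y) S T
        rw [hdc1, hdc2] at hidd
        have hA𝒯 : S ∩ T ∈ 𝒯 := by
          rw [h𝒯, Finset.mem_filter, Finset.mem_powerset]
          exact ⟨hAU, hAne, hAt⟩
        have hB𝒯 : S ∪ T ∈ 𝒯 := by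
          rw [h𝒯, Finset.mem_filter, Finset.mem_powerset]
          exact ⟨hBU, hBne, hBt⟩
        have hTin : T ∈ L.filter (fun R => SEPaux.Cross S R) :=
          Finset.mem_filter.2 ⟨hTL, hcross⟩
        have hcardA : (L.filter (fun R => SEPaux.Cross (S ∩ T) R)).card ≤ c := by
          have hsubA : L.filter (fun R => SEPaux.Cross (S ∩ T) R)
              ⊆ L.filter (fun R => SEPaux.Cross S R) := by
            intro R hR
            obtain ⟨hRL, hRc⟩ := Finset.mem_filter.1 hR
            exact Finset.mem_filter.2 ⟨hRL, SEPaux.cross_of_cross_inter (hLlam R hRL T hTL) hRc⟩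
          have hne' : L.filter (fun R => SEPaux.Cross (S ∩ T) R)
              ≠ L.filter (fun R => SEPaux.Cross S R) := by
            intro h
            rw [← h] at hTin
            exact SEPaux.not_cross_inter_right (Finset.mem_filter.1 hTin).2
          have hlt := Finset.card_lt_card (Finset.ssubset_iff_subset_ne.2 ⟨hsubA, hne'⟩)
          omega
        have hcardB : (L.filter (fun R => SEPaux.Cross (S ∪ T) R)).card ≤ c := by
          have hsubB : L.filter (fun R => SEPaux.Cross (S ∪ T) R)
              ⊆ L.filter (fun R => SEPaux.Cross S R) := by
            intro R hR
            obtain ⟨hRL, hRc⟩ := Finset.mem_filter.1 hR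
            exact Finset.mem_filter.2 ⟨hRL,
              SEPaux.cross_of_cross_union (hLlam R hRL T hTL) hcross hRc⟩
          have hne' : L.filter (fun R => SEPaux.Cross (S ∪ T) R)
              ≠ L.filter (fun R => SEPaux.Cross S R) := by
            intro h
            rw [← h] at hTin
            exact SEPaux.not_cross_union_right (Finset.mem_filter.1 hTin).2
          have hlt := Finset.card_lt_card (Finset.ssubset_iff_subset_ne.2 ⟨hsubB, hne'⟩)
          omega
        have hAz := ih (S ∩ T) hA𝒯 hcardA
        have hBz := ih (S ∪ T) hB𝒯 hcardB
        have hTz := hyT T hTL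
        linarith
    have hdmsym : ∀ i j, SEPaux.dm σ y i j = SEPaux.dm σ y j i := SEPaux.dm_symm σ hσlt y
    have hall : ∀ S : Finset (Fin n), S.Nonempty → S ≠ Finset.univ →
        SEPaux.cutF x S = 2 → SEPaux.cutF (SEPaux.dm σ y) S = 0 := by
      intro S hne hneu ht
      by_cases hv : v0 ∈ S
      · have hSc𝒯 : Sᶜ ∈ 𝒯 := by
          rw [h𝒯, Finset.mem_filter, Finset.mem_powerset]
          refine ⟨?_, ?_, ?_⟩
          · intro a ha
            rw [hU]
            refine Finset.mem_erase.2 ⟨?_, Finset.mem_univ a⟩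
            intro h
            rw [h] at ha
            exact (Finset.mem_compl.1 ha) hv
          · rw [Finset.nonempty_iff_ne_empty]
            intro h
            apply hneu
            rwa [Finset.compl_eq_empty_iff] at h
          · rw [SEPaux.cutF_compl x hsym]; exact ht
        have h := key _ Sᶜ hSc𝒯 (le_refl _)
        rwa [SEPaux.cutF_compl (SEPaux.dm σ y) hdmsym S] at h
      · have hS𝒯 : S ∈ 𝒯 := by
          rw [h𝒯, Finset.mem_filter, Finset.mem_powerset]
          refine ⟨?_, hne, ht⟩
          intro a ha
          rw [hU]
          refine Finset.mem_erase.2 ⟨?_, Finset.mem_univ a⟩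
          intro h
          rw [h] at ha
          exact hv ha
        exact key _ S hS𝒯 (le_refl _)
    have hzero : SEPaux.dm σ y = 0 := SEPaux.direction_zero n hn x hx (SEPaux.dm σ y)
      hdmsym (fun i j h => SEPaux.dm_zero σ hσx hsym y i j h) hall
    funext e
    have he := congrFun (congrFun hzero e.1.1) e.1.2
    rw [SEPaux.dm_apply_mem σ y e.2] at he
    simpa using he
  have hrank : σ.card ≤ L.card := by
    have h1 : Module.finrank ℝ ({p // p ∈ σ} → ℝ) = σ.card := by
      rw [Module.finrank_fintype_fun_eq_card, Fintype.card_coe]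
    have h2 : Module.finrank ℝ ({T // T ∈ L} → ℝ) = L.card := by
      rw [Module.finrank_fintype_fun_eq_card, Fintype.card_coe]
    have h3 := LinearMap.finrank_le_finrank_of_injective hinj
    omega
  omega
end

section
/- Let x be a vertex of P_SEP(n) and let c be a metric cost with c·x > 0 attaining Gap⁺(x), i.e., TSP(c)/(c·x) = Gap⁺(x). Let c̃ be the metric completion of the restriction of c to the edges of the support graph G_x (which is connected). Then c̃ is metric, c̃·x > 0, and TSP(c̃)/(c̃·x) = Gap⁺(x). -/
open Finset

section AuxMC

variable {n : ℕ}

private lemma tri' {c : Fin n → Fin n → ℝ} (hc : IsMetric n c) (i j k : Fin n) :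
    c i j ≤ c i k + c k j := by
  obtain ⟨hs, hd, hnn, ht⟩ := hc
  by_cases hij : i = j
  · rw [hij, hd]; exact add_nonneg (hnn j k) (hnn k j)
  by_cases hik : i = k
  · rw [hik, hd]; linarith [hnn k j]
  by_cases hkj : k = j
  · rw [hkj, hd]; linarith [hnn i j]
  · exact ht i j k hij (fun h => hkj h.symm) hik

private lemma pathCost_cons_cons (c : Fin n → Fin n → ℝ) (a b : Fin n) (l : List (Fin n)) :
    pathCost c (a :: b :: l) = c a b + pathCost c (b :: l) := by simp [pathCost]

private lemma pathCost_singleton (c : Fin n → Fin n → ℝ) (a : Fin n) :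
    pathCost c [a] = 0 := by simp [pathCost]

private lemma pathCost_ge {c : Fin n → Fin n → ℝ} (hc : IsMetric n c) :
    ∀ (p : List (Fin n)) (i j : Fin n), p.head? = some i → p.getLast? = some j →
      c i j ≤ pathCost c p
  | [], i, j => by intro h; simp at h
  | [a], i, j => by
      intro h1 h2
      simp only [List.head?_cons, Option.some.injEq] at h1
      simp only [List.getLast?_singleton, Option.some.injEq] at h2
      subst h1; subst h2
      rw [pathCost_singleton, hc.2.1]
  | a :: b :: t, i, j => by
      intro h1 h2
      simp only [List.head?_cons, Option.some.injEq] at h1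
      subst h1
      rw [List.getLast?_cons_cons] at h2
      have ih := pathCost_ge hc (b :: t) b j rfl h2
      rw [pathCost_cons_cons]
      calc c a j ≤ c a b + c b j := tri' hc _ _ _
        _ ≤ c a b + pathCost c (b :: t) := by linarith

private lemma pathCost_append (c : Fin n → Fin n → ℝ) :
    ∀ (p t : List (Fin n)) (hp : p ≠ []) (ht : t ≠ []),
      pathCost c (p ++ t) = pathCost c p + c (p.getLast hp) (t.head ht) + pathCost c t
  | [], t, hp, ht => absurd rfl hp
  | [a], t, hp, ht => by
      cases t with
      | nil => exact absurd rfl ht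
      | cons b s =>
          show pathCost c (a :: b :: s) = _
          rw [pathCost_cons_cons, pathCost_singleton]
          simp
  | a :: b :: r, t, hp, ht => by
      have ih := pathCost_append c (b :: r) t (by simp) ht
      show pathCost c (a :: ((b :: r) ++ t)) = _
      have hbr : (b :: r) ++ t = b :: (r ++ t) := rfl
      rw [hbr, pathCost_cons_cons, ← hbr, ih, pathCost_cons_cons]
      rw [List.getLast_cons (by simp : (b :: r) ≠ [])]
      ring

private lemma pathCost_reverse {c : Fin n → Fin n → ℝ} (hs : ∀ i j, c i j = c j i) :
    ∀ p : List (Fin n), pathCost c p.reverse = pathCost c p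
  | [] => rfl
  | [a] => rfl
  | a :: b :: t => by
      have ih := pathCost_reverse hs (b :: t)
      have h1 : (a :: b :: t).reverse = (b :: t).reverse ++ [a] := by simp
      have hrne : (b :: t).reverse ≠ [] := by simp
      rw [h1, pathCost_append c _ [a] hrne (by simp)]
      have hlast : ((b :: t).reverse).getLast hrne = b := by
        have h := List.getLast?_reverse (l := b :: t)
        rw [List.getLast?_eq_getLast hrne] at h
        simpa using h
      rw [hlast, ih, pathCost_singleton, pathCost_cons_cons]
      simp only [List.head_cons]
      rw [hs b a]; ring

private lemma cut_pos {x : Fin n → Fin n → ℝ} (hP : InPSEP n x) (S : Finset (Fin n))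
    (hS : S.Nonempty) (hSc : Sᶜ.Nonempty) : 0 < ∑ i ∈ S, ∑ j ∈ Sᶜ, x i j := by
  classical
  obtain ⟨hsym, hdiag, hdeg, hsub, hbd⟩ := hP
  have key : ∀ T : Finset (Fin n), ∑ i ∈ T, ∑ j ∈ Tᶜ, x i j
      = 2 * T.card - ∑ i ∈ T, ∑ j ∈ T, x i j := by
    intro T
    have hrow : ∀ i : Fin n, ∑ j ∈ Tᶜ, x i j = 2 - ∑ j ∈ T, x i j := by
      intro i
      have h := Finset.sum_compl_add_sum T (x i)
      rw [hdeg i] at h; linarith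
    rw [Finset.sum_congr rfl fun i _ => hrow i, Finset.sum_sub_distrib]
    simp [mul_comm]
  have small : ∀ T : Finset (Fin n), T.Nonempty → T.card ≤ 2 →
      2 ≤ ∑ i ∈ T, ∑ j ∈ Tᶜ, x i j := by
    intro T hT hT2
    have hc1 : T.card = 1 ∨ T.card = 2 := by
      have := Finset.card_pos.mpr hT; omega
    rcases hc1 with h1 | h2
    · obtain ⟨a, rfl⟩ := Finset.card_eq_one.mp h1
      rw [key]
      simp [hdiag a, h1]
    · obtain ⟨a, b, hab, rfl⟩ := Finset.card_eq_two.mp h2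
      rw [key, h2]
      have e1 : ∑ i ∈ ({a, b} : Finset (Fin n)), ∑ j ∈ ({a, b} : Finset (Fin n)), x i j
          = 2 * x a b := by
        rw [Finset.sum_pair hab, Finset.sum_pair hab, Finset.sum_pair hab]
        rw [hdiag a, hdiag b, hsym b a]; ring
      rw [e1]
      have := (hbd a b).2
      push_cast
      linarith
  by_cases hsmall : S.card ≤ 2
  · linarith [small S hS hsmall]
  by_cases hmid : S.card + 3 ≤ n
  · have := hsub S (by omega) hmid
    linarith
  · -- complement is small
    have hflip : ∑ i ∈ S, ∑ j ∈ Sᶜ, x i j = ∑ i ∈ Sᶜ, ∑ j ∈ (Sᶜ)ᶜ, x i j := by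
      rw [compl_compl, Finset.sum_comm]
      exact Finset.sum_congr rfl fun j _ => Finset.sum_congr rfl fun i _ => hsym i j
    rw [hflip]
    have hcard : Sᶜ.card ≤ 2 := by
      have h1 : Sᶜ.card = n - S.card := by
        rw [Finset.card_compl, Fintype.card_fin]
      omega
    linarith [small Sᶜ hSc hcard]

private lemma reflTransGen_path {A : Fin n → Fin n → Prop} {i j : Fin n}
    (h : Relation.ReflTransGen A i j) : ∃ p, IsPathIn A i j p := by
  induction h with
  | refl => exact ⟨[i], rfl, rfl, List.isChain_singleton i⟩
  | @tail b cc hab hbc ih =>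
      obtain ⟨p, h1, h2, h3⟩ := ih
      rcases p with _ | ⟨a, t⟩
      · simp at h1
      refine ⟨(a :: t) ++ [cc], by simpa using h1, by rw [List.getLast?_concat], ?_⟩
      change List.IsChain _ _
      rw [List.isChain_append]
      refine ⟨h3, List.isChain_singleton cc, ?_⟩
      intro u hu v hv
      simp only [List.head?_cons, Option.mem_def, Option.some.injEq] at hv
      rw [h2] at hu
      simp only [Option.mem_def, Option.some.injEq] at hu
      subst hu; subst hv; exact hbc

private lemma exists_path_all {x : Fin n → Fin n → ℝ} (hP : InPSEP n x) (i j : Fin n) :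
    ∃ p, IsPathIn (fun u v : Fin n => u ≠ v ∧ 0 < x u v) i j p := by
  classical
  set A := fun u v : Fin n => u ≠ v ∧ 0 < x u v with hA
  have hreach : Relation.ReflTransGen A i j := by
    by_contra hrj
    set S : Finset (Fin n) := Finset.univ.filter (fun v => Relation.ReflTransGen A i v) with hSdef
    have hiS : i ∈ S := by
      simp only [hSdef, Finset.mem_filter, Finset.mem_univ, true_and]
      exact Relation.ReflTransGen.refl
    have hjS : j ∉ S := by
      simp only [hSdef, Finset.mem_filter, Finset.mem_univ, true_and]
      exact hrj
    have hzero : ∀ u ∈ S, ∀ v ∈ Sᶜ, x u v = 0 := by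
      intro u hu v hv
      by_contra hne
      have hpos : 0 < x u v := lt_of_le_of_ne (hP.2.2.2.2 u v).1 (Ne.symm hne)
      have huv : u ≠ v := by
        rintro rfl; rw [hP.2.1] at hpos; exact lt_irrefl _ hpos
      have hvS : v ∈ S := by
        simp only [hSdef, Finset.mem_filter, Finset.mem_univ, true_and] at hu ⊢
        exact hu.tail ⟨huv, hpos⟩
      exact (Finset.mem_compl.mp hv) hvS
    have hposcut := cut_pos hP S ⟨i, hiS⟩ ⟨j, Finset.mem_compl.mpr hjS⟩
    have hz : ∑ u ∈ S, ∑ v ∈ Sᶜ, x u v = 0 :=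
      Finset.sum_eq_zero fun u hu => Finset.sum_eq_zero fun v hv => hzero u hu v hv
    rw [hz] at hposcut; exact lt_irrefl _ hposcut
  exact reflTransGen_path hreach

section MC

variable {x c : Fin n → Fin n → ℝ}

private lemma mc_ge (hP : InPSEP n x) (hc : IsMetric n c) (i j : Fin n) :
    c i j ≤ metricCompletion n (fun u v : Fin n => u ≠ v ∧ 0 < x u v) c i j := by
  set A := fun u v : Fin n => u ≠ v ∧ 0 < x u v with hA
  by_cases h : A i j
  · rw [metricCompletion, if_pos h]
  · rw [metricCompletion, if_neg h]
    obtain ⟨p, hp⟩ := exists_path_all hP i j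
    refine le_csInf ⟨pathCost c p, p, hp, rfl⟩ ?_
    rintro r ⟨q, hq, rfl⟩
    exact pathCost_ge hc q i j hq.1 hq.2.1

private lemma mc_le_path (hc : IsMetric n c) (i j : Fin n) (p : List (Fin n))
    (hp : IsPathIn (fun u v : Fin n => u ≠ v ∧ 0 < x u v) i j p) :
    metricCompletion n (fun u v : Fin n => u ≠ v ∧ 0 < x u v) c i j ≤ pathCost c p := by
  set A := fun u v : Fin n => u ≠ v ∧ 0 < x u v with hA
  by_cases h : A i j
  · rw [metricCompletion, if_pos h]
    exact pathCost_ge hc p i j hp.1 hp.2.1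
  · rw [metricCompletion, if_neg h]
    refine csInf_le ⟨c i j, ?_⟩ ⟨p, hp, rfl⟩
    rintro r ⟨q, hq, rfl⟩
    exact pathCost_ge hc q i j hq.1 hq.2.1

private lemma mc_exists_path_lt (hP : InPSEP n x) (hc : IsMetric n c) (i j : Fin n)
    {ε : ℝ} (hε : 0 < ε) :
    ∃ p, IsPathIn (fun u v : Fin n => u ≠ v ∧ 0 < x u v) i j p ∧
      pathCost c p < metricCompletion n (fun u v : Fin n => u ≠ v ∧ 0 < x u v) c i j + ε := by
  set A := fun u v : Fin n => u ≠ v ∧ 0 < x u v with hA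
  by_cases h : A i j
  · refine ⟨[i, j], ⟨rfl, rfl, List.isChain_pair.mpr h⟩, ?_⟩
    rw [metricCompletion, if_pos h, pathCost_cons_cons, pathCost_singleton]
    linarith
  · rw [metricCompletion, if_neg h]
    obtain ⟨p0, hp0⟩ := exists_path_all hP i j
    obtain ⟨r, ⟨q, hq, rfl⟩, hlt⟩ :=
      Real.lt_sInf_add_pos (⟨pathCost c p0, p0, hp0, rfl⟩ :
        {r | ∃ p, IsPathIn A i j p ∧ r = pathCost c p}.Nonempty) hε
    exact ⟨q, hq, hlt⟩

private lemma mc_diag (hP : InPSEP n x) (hc : IsMetric n c) (i : Fin n) :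
    metricCompletion n (fun u v : Fin n => u ≠ v ∧ 0 < x u v) c i i = 0 := by
  refine le_antisymm ?_ ?_
  · have := mc_le_path (x := x) hc i i [i] ⟨rfl, rfl, List.isChain_singleton i⟩
    rwa [pathCost_singleton] at this
  · exact le_trans (le_of_eq (hc.2.1 i).symm) (mc_ge hP hc i i)

private lemma mc_symm (hP : InPSEP n x) (hc : IsMetric n c) (i j : Fin n) :
    metricCompletion n (fun u v : Fin n => u ≠ v ∧ 0 < x u v) c i j
      = metricCompletion n (fun u v : Fin n => u ≠ v ∧ 0 < x u v) c j i := by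
  set A := fun u v : Fin n => u ≠ v ∧ 0 < x u v with hA
  have hAs : ∀ u v, A u v → A v u := by
    intro u v ⟨h1, h2⟩
    exact ⟨Ne.symm h1, by rwa [hP.1 v u]⟩
  have main : ∀ a b : Fin n, metricCompletion n A c a b ≤ metricCompletion n A c b a := by
    intro a b
    refine le_of_forall_pos_le_add ?_
    intro ε hε
    obtain ⟨p, hp, hcost⟩ := mc_exists_path_lt hP hc b a hε
    have hrev : IsPathIn A a b p.reverse := by
      refine ⟨?_, ?_, ?_⟩
      · rw [List.head?_reverse]; exact hp.2.1
      · rw [List.getLast?_reverse]; exact hp.1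
      · change List.IsChain _ _
        rw [List.isChain_reverse]
        exact hp.2.2.imp (fun u v h => hAs u v h)
    have := mc_le_path (x := x) hc a b p.reverse hrev
    rw [pathCost_reverse hc.1] at this
    linarith
  exact le_antisymm (main i j) (main j i)

private lemma mc_triangle (hP : InPSEP n x) (hc : IsMetric n c) (i j k : Fin n)
    (hjk : j ≠ k) :
    metricCompletion n (fun u v : Fin n => u ≠ v ∧ 0 < x u v) c i j
      ≤ metricCompletion n (fun u v : Fin n => u ≠ v ∧ 0 < x u v) c i k
        + metricCompletion n (fun u v : Fin n => u ≠ v ∧ 0 < x u v) c k j := by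
  set A := fun u v : Fin n => u ≠ v ∧ 0 < x u v with hA
  refine le_of_forall_pos_le_add ?_
  intro ε hε
  obtain ⟨p, hp, hpc⟩ := mc_exists_path_lt hP hc i k (half_pos hε)
  obtain ⟨q, hq, hqc⟩ := mc_exists_path_lt hP hc k j (half_pos hε)
  rcases q with _ | ⟨k', t⟩
  · simp [IsPathIn] at hq
  have hk' : k' = k := by
    have h := hq.1; simp only [List.head?_cons, Option.some.injEq] at h; exact h
  rw [hk'] at hq hqc
  rcases t with _ | ⟨b, s⟩
  · exact absurd (by simpa using hq.2.1 : k = j) (Ne.symm hjk)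
  rcases p with _ | ⟨a, u⟩
  · simp [IsPathIn] at hp
  have hpne : (a :: u) ≠ [] := by simp
  have hlastp : (a :: u).getLast hpne = k := by
    have h := hp.2.1
    rw [List.getLast?_eq_getLast hpne] at h
    simpa using h
  have hchq := List.isChain_cons_cons.mp hq.2.2
  have hcomb : IsPathIn A i j ((a :: u) ++ (b :: s)) := by
    refine ⟨by simpa using hp.1, ?_, ?_⟩
    · rw [List.getLast?_append_of_ne_nil _ (by simp)]
      have h2 := hq.2.1
      rwa [List.getLast?_cons_cons] at h2
    · change List.IsChain _ _
      rw [List.isChain_append]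
      refine ⟨hp.2.2, hchq.2, ?_⟩
      intro u' hu' v' hv'
      rw [List.getLast?_eq_getLast hpne, hlastp] at hu'
      simp only [Option.mem_def, Option.some.injEq, List.head?_cons] at hu' hv'
      rw [← hu', ← hv']
      exact hchq.1
  have hval := mc_le_path (x := x) hc i j _ hcomb
  rw [pathCost_append c (a :: u) (b :: s) hpne (by simp), hlastp] at hval
  rw [pathCost_cons_cons] at hqc
  simp only [List.head_cons] at hval
  linarith

end MC

private lemma TSP_mem (c : Fin n → Fin n → ℝ) :
    ∃ σ : Equiv.Perm (Fin n), TSP n c = tourCost n c σ := by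
  have hset : {r | ∃ σ : Equiv.Perm (Fin n), r = tourCost n c σ}
      = Set.range (tourCost n c) := by
    ext r; simp [Set.range, eq_comm]
  have hne : {r | ∃ σ : Equiv.Perm (Fin n), r = tourCost n c σ}.Nonempty :=
    ⟨tourCost n c 1, 1, rfl⟩
  have hfin : {r | ∃ σ : Equiv.Perm (Fin n), r = tourCost n c σ}.Finite := by
    rw [hset]; exact Set.finite_range _
  exact Set.Nonempty.csInf_mem hne hfin

private lemma TSP_le (c : Fin n → Fin n → ℝ) (σ : Equiv.Perm (Fin n)) :
    TSP n c ≤ tourCost n c σ := by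
  have hset : {r | ∃ σ : Equiv.Perm (Fin n), r = tourCost n c σ}
      = Set.range (tourCost n c) := by
    ext r; simp [Set.range, eq_comm]
  have hfin : {r | ∃ σ : Equiv.Perm (Fin n), r = tourCost n c σ}.Finite := by
    rw [hset]; exact Set.finite_range _
  exact csInf_le hfin.bddBelow ⟨σ, rfl⟩

open Fin.NatCast in
private lemma metric_zero_of_tour_zero {m : ℕ} {c : Fin (m+3) → Fin (m+3) → ℝ}
    (hc : IsMetric (m+3) c) (σ : Equiv.Perm (Fin (m+3)))
    (hterm : ∀ i, c (σ i) (σ (finRotate (m+3) i)) = 0) : ∀ i j, c i j = 0 := by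
  have hrot : ∀ i : Fin (m+3), c (σ i) (σ (i+1)) = 0 := by
    intro i
    have h := hterm i
    rwa [finRotate_succ_apply] at h
  have key : ∀ (d : ℕ) (a : Fin (m+3)), c (σ a) (σ (a + (d : Fin (m+3)))) = 0 := by
    intro d
    induction d with
    | zero =>
        intro a
        simp only [Nat.cast_zero, add_zero]
        exact hc.2.1 (σ a)
    | succ d ih =>
        intro a
        have h1 : (((d+1 : ℕ)) : Fin (m+3)) = (d : Fin (m+3)) + 1 := by push_cast; ring
        rw [h1, ← add_assoc]
        have e1 := hrot (a + (d : Fin (m+3)))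
        have e2 := ih a
        have e3 := tri' hc (σ a) (σ (a + (d : Fin (m+3)) + 1)) (σ (a + (d : Fin (m+3))))
        have e4 := hc.2.2.1 (σ a) (σ (a + (d : Fin (m+3)) + 1))
        linarith
  intro i j
  have h := key ((σ.symm j - σ.symm i : Fin (m+3)).val) (σ.symm i)
  rw [Fin.cast_val_eq_self] at h
  have h2 : σ.symm i + (σ.symm j - σ.symm i) = σ.symm j := by abel
  rw [h2, Equiv.apply_symm_apply, Equiv.apply_symm_apply] at h
  exact h

end AuxMC

/-- If the metric cost `c` attains `Gap⁺(x)` on the vertex `x`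
(with `c·x > 0`), then the metric completion `c̃` of the restriction of `c` to
the support graph of `x` is metric, satisfies `c̃·x > 0`, and also attains
`Gap⁺(x)`. -/
theorem metricCompletion_attains_gapPlus (n : ℕ) (hn : 3 ≤ n)
    (x : Fin n → Fin n → ℝ) (hx : IsVertex n x)
    (c : Fin n → Fin n → ℝ) (hc : IsMetric n c) (hcx : 0 < dotE n c x)
    (hattain : TSP n c / dotE n c x = GapPlus n x) :
    IsMetric n (metricCompletion n (fun i j => i ≠ j ∧ 0 < x i j) c) ∧
    0 < dotE n (metricCompletion n (fun i j => i ≠ j ∧ 0 < x i j) c) x ∧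
    TSP n (metricCompletion n (fun i j => i ≠ j ∧ 0 < x i j) c) /
        dotE n (metricCompletion n (fun i j => i ≠ j ∧ 0 < x i j) c) x
      = GapPlus n x := by
  classical
  obtain ⟨m, rfl⟩ : ∃ m, n = m + 3 := ⟨n - 3, by omega⟩
  have hP : InPSEP (m+3) x := hx.1
  have hmet : IsMetric (m+3) (metricCompletion (m+3) (fun i j => i ≠ j ∧ 0 < x i j) c) :=
    ⟨mc_symm hP hc, mc_diag hP hc,
     fun i j => le_trans (hc.2.2.1 i j) (mc_ge hP hc i j),
     fun i j k _ hjk _ => mc_triangle hP hc i j k hjk⟩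
  have hdoteq : dotE (m+3) (metricCompletion (m+3) (fun i j => i ≠ j ∧ 0 < x i j) c) x
      = dotE (m+3) c x := by
    unfold dotE
    congr 1
    refine Finset.sum_congr rfl fun i _ => Finset.sum_congr rfl fun j _ => ?_
    by_cases hxij : x i j = 0
    · rw [hxij, mul_zero, mul_zero]
    · have hpos : 0 < x i j := lt_of_le_of_ne (hP.2.2.2.2 i j).1 (Ne.symm hxij)
      have hij : i ≠ j := by rintro rfl; rw [hP.2.1 i] at hxij; exact hxij rfl
      rw [metricCompletion, if_pos ⟨hij, hpos⟩]
  have hcx' : 0 < dotE (m+3) (metricCompletion (m+3) (fun i j => i ≠ j ∧ 0 < x i j) c) x := by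
    rw [hdoteq]; exact hcx
  have hTSPle : TSP (m+3) c
      ≤ TSP (m+3) (metricCompletion (m+3) (fun i j => i ≠ j ∧ 0 < x i j) c) := by
    obtain ⟨σ, hσ⟩ := TSP_mem (metricCompletion (m+3) (fun i j => i ≠ j ∧ 0 < x i j) c)
    rw [hσ]
    refine le_trans (TSP_le c σ) ?_
    unfold tourCost
    exact Finset.sum_le_sum fun i _ => mc_ge hP hc _ _
  refine ⟨hmet, hcx', ?_⟩
  have hge : GapPlus (m+3) x
      ≤ TSP (m+3) (metricCompletion (m+3) (fun i j => i ≠ j ∧ 0 < x i j) c)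
        / dotE (m+3) (metricCompletion (m+3) (fun i j => i ≠ j ∧ 0 < x i j) c) x := by
    rw [hdoteq, ← hattain]
    exact (div_le_div_iff_of_pos_right hcx).mpr hTSPle
  refine le_antisymm ?_ hge
  have hmem : TSP (m+3) (metricCompletion (m+3) (fun i j => i ≠ j ∧ 0 < x i j) c)
        / dotE (m+3) (metricCompletion (m+3) (fun i j => i ≠ j ∧ 0 < x i j) c) x
      ∈ {r | ∃ c', IsMetric (m+3) c' ∧ 0 < dotE (m+3) c' x ∧
          r = TSP (m+3) c' / dotE (m+3) c' x} :=
    ⟨metricCompletion (m+3) (fun i j => i ≠ j ∧ 0 < x i j) c, hmet, hcx', rfl⟩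
  by_cases hbdd : BddAbove {r | ∃ c', IsMetric (m+3) c' ∧ 0 < dotE (m+3) c' x ∧
      r = TSP (m+3) c' / dotE (m+3) c' x}
  · rw [GapPlus]
    exact le_csSup hbdd hmem
  · exfalso
    have h0 : GapPlus (m+3) x = 0 := by
      rw [GapPlus]; exact Real.sSup_of_not_bddAbove hbdd
    have hT0 : TSP (m+3) c = 0 := by
      have h := hattain.trans h0
      rcases div_eq_zero_iff.mp h with h' | h'
      · exact h'
      · exact absurd h' (ne_of_gt hcx)
    obtain ⟨σ, hσ⟩ := TSP_mem c
    have hsum : ∑ i, c (σ i) (σ (finRotate (m+3) i)) = 0 := by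
      have h := hσ.symm.trans hT0
      rwa [tourCost] at h
    have hterm : ∀ i, c (σ i) (σ (finRotate (m+3) i)) = 0 := fun i =>
      (Finset.sum_eq_zero_iff_of_nonneg fun i _ => hc.2.2.1 _ _).mp hsum i (Finset.mem_univ i)
    have hzero := metric_zero_of_tour_zero hc σ hterm
    have hd0 : dotE (m+3) c x = 0 := by
      unfold dotE
      rw [Finset.sum_eq_zero fun i _ => Finset.sum_eq_zero fun j _ => by
        rw [hzero i j, zero_mul]]
      norm_num
    linarith
end
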